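/- arXiv:2101.01049 — 9 statements merged into one kernel-verified Lean document; each statement's English description precedes it below -/
import Mathlib

section
/- For every γ = (γ₁,γ₂,γ₃,γ₄) ∈ ℤ⁴, the Γ-series F_γ satisfies the first Gelfand–Kapranov–Zelevinsky equation: ∂²F_γ/∂z₁∂z₄ − ∂²F_γ/∂z₂∂z₃ = 0 (an identity of polynomials in ℂ[z₁,z₂,z₃,z₄]). -/
open MvPolynomial Finset

/-- The hypergeometric Γ-series `F_γ` for the lattice `B = ℤ⟨(1,-1,-1,1)⟩`,
as a polynomial in `ℂ[z₁,z₂,z₃,z₄]`. -/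
noncomputable def GammaSeries (γ : Fin 4 → ℤ) : MvPolynomial (Fin 4) ℂ :=
  ∑ n ∈ Finset.Icc (max (-γ 0) (-γ 3)) (min (γ 1) (γ 2)),
    MvPolynomial.C ((((γ 0 + n).toNat.factorial * (γ 1 - n).toNat.factorial *
        (γ 2 - n).toNat.factorial * (γ 3 + n).toNat.factorial : ℕ) : ℂ))⁻¹ *
      (X 0 ^ (γ 0 + n).toNat * X 1 ^ (γ 1 - n).toNat *
        X 2 ^ (γ 2 - n).toNat * X 3 ^ (γ 3 + n).toNat)

namespace GKZaux

noncomputable def term (r : ℂ) (a b c d : ℕ) : MvPolynomial (Fin 4) ℂ :=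
  C r * (X 0 ^ a * X 1 ^ b * X 2 ^ c * X 3 ^ d)

noncomputable def expo (a b c d : ℕ) : Fin 4 →₀ ℕ :=
  Finsupp.single 0 a + Finsupp.single 1 b + Finsupp.single 2 c + Finsupp.single 3 d

lemma term_eq_monomial (r : ℂ) (a b c d : ℕ) :
    term r a b c d = monomial (expo a b c d) r := by
  simp [term, expo, X_pow_eq_monomial, monomial_mul, C_mul_monomial]

lemma term_zero (a b c d : ℕ) : term 0 a b c d = 0 := by simp [term]

lemma pd03 (r : ℂ) (a b c d : ℕ) :
    pderiv 0 (pderiv 3 (term r a b c d)) = term (r * d * a) (a - 1) b c (d - 1) := by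
  rw [term_eq_monomial, pderiv_monomial, pderiv_monomial, term_eq_monomial]
  have h3 : (expo a b c d) 3 = d := by
    simp [expo, Finsupp.single_apply]
  have h0 : ((expo a b c d - Finsupp.single 3 1 : Fin 4 →₀ ℕ)) 0 = a := by
    simp [expo, Finsupp.single_apply, Finsupp.tsub_apply]
  have hs : expo a b c d - Finsupp.single 3 1 - Finsupp.single 0 1
      = expo (a - 1) b c (d - 1) := by
    ext i
    fin_cases i <;> simp [expo, Finsupp.single_apply, Finsupp.tsub_apply]
  rw [h3, h0, hs, mul_assoc]

lemma pd12 (r : ℂ) (a b c d : ℕ) :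
    pderiv 1 (pderiv 2 (term r a b c d)) = term (r * c * b) a (b - 1) (c - 1) d := by
  rw [term_eq_monomial, pderiv_monomial, pderiv_monomial, term_eq_monomial]
  have h2 : (expo a b c d) 2 = c := by
    simp [expo, Finsupp.single_apply]
  have h1 : ((expo a b c d - Finsupp.single 2 1 : Fin 4 →₀ ℕ)) 1 = b := by
    simp [expo, Finsupp.single_apply, Finsupp.tsub_apply]
  have hs : expo a b c d - Finsupp.single 2 1 - Finsupp.single 1 1
      = expo a (b - 1) (c - 1) d := by
    ext i
    fin_cases i <;> simp [expo, Finsupp.single_apply, Finsupp.tsub_apply]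
  rw [h2, h1, hs, mul_assoc]

lemma coef_eq (a b c d : ℕ) :
    ((((a + 1).factorial * b.factorial * c.factorial * (d + 1).factorial : ℕ) : ℂ))⁻¹ *
        ((d + 1 : ℕ) : ℂ) * ((a + 1 : ℕ) : ℂ)
      = (((a.factorial * (b + 1).factorial * (c + 1).factorial * d.factorial : ℕ) : ℂ))⁻¹ *
        ((c + 1 : ℕ) : ℂ) * ((b + 1 : ℕ) : ℂ) := by
  have hf : ∀ n : ℕ, ((n.factorial : ℂ)) ≠ 0 := fun n =>
    Nat.cast_ne_zero.mpr n.factorial_ne_zero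
  have hX : ((((a + 1).factorial * b.factorial * c.factorial * (d + 1).factorial : ℕ) : ℂ)) ≠ 0 :=
    Nat.cast_ne_zero.mpr (by
      exact Nat.mul_ne_zero (Nat.mul_ne_zero (Nat.mul_ne_zero
        (Nat.factorial_ne_zero _) (Nat.factorial_ne_zero _)) (Nat.factorial_ne_zero _))
        (Nat.factorial_ne_zero _))
  have hY : (((a.factorial * (b + 1).factorial * (c + 1).factorial * d.factorial : ℕ) : ℂ)) ≠ 0 :=
    Nat.cast_ne_zero.mpr (by
      exact Nat.mul_ne_zero (Nat.mul_ne_zero (Nat.mul_ne_zero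
        (Nat.factorial_ne_zero _) (Nat.factorial_ne_zero _)) (Nat.factorial_ne_zero _))
        (Nat.factorial_ne_zero _))
  rw [inv_mul_eq_div, div_mul_eq_mul_div, inv_mul_eq_div, div_mul_eq_mul_div,
    div_eq_div_iff hX hY]
  push_cast [Nat.factorial_succ]
  ring

lemma sum_shift {M : Type*} [AddCommMonoid M] (L U : ℤ) (g h : ℤ → M)
    (hg : g L = 0) (hh : h U = 0) (key : ∀ m, L ≤ m → m < U → g (m + 1) = h m) :
    ∑ n ∈ Finset.Icc L U, g n = ∑ n ∈ Finset.Icc L U, h n := by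
  calc ∑ n ∈ Finset.Icc L U, g n
      = ∑ n ∈ (Finset.Icc L U).erase L, g n := (Finset.sum_erase _ hg).symm
    _ = ∑ n ∈ Finset.Ioc L U, g n := by rw [Finset.Icc_erase_left]
    _ = ∑ n ∈ Finset.Ico L U, h n := ?_
    _ = ∑ n ∈ (Finset.Icc L U).erase U, h n := by rw [Finset.Icc_erase_right]
    _ = ∑ n ∈ Finset.Icc L U, h n := Finset.sum_erase _ hh
  refine Finset.sum_nbij' (fun n => n - 1) (fun n => n + 1) ?_ ?_ ?_ ?_ ?_
  · intro n hn; simp only [Finset.mem_Ioc] at hn; simp only [Finset.mem_Ico]; omega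
  · intro n hn; simp only [Finset.mem_Ico] at hn; simp only [Finset.mem_Ioc]; omega
  · intro n _; omega
  · intro n _; omega
  · intro n hn
    simp only [Finset.mem_Ioc] at hn
    have hkey := key (n - 1) (by omega) (by omega)
    have hn1 : n - 1 + 1 = n := by omega
    rw [hn1] at hkey
    exact hkey

end GKZaux

open GKZaux in
/-- The Γ-series satisfies the first GKZ equation:
`∂²F/∂z₁∂z₄ − ∂²F/∂z₂∂z₃ = 0`. -/
theorem gammaSeries_gkz_first (γ : Fin 4 → ℤ) :
    pderiv 0 (pderiv 3 (GammaSeries γ)) - pderiv 1 (pderiv 2 (GammaSeries γ)) = 0 := by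
  rw [sub_eq_zero]
  unfold GammaSeries
  rw [map_sum, map_sum, map_sum, map_sum]
  set L := max (-γ 0) (-γ 3) with hL
  set U := min (γ 1) (γ 2) with hU
  have hterm : ∀ n : ℤ,
      (MvPolynomial.C ((((γ 0 + n).toNat.factorial * (γ 1 - n).toNat.factorial *
        (γ 2 - n).toNat.factorial * (γ 3 + n).toNat.factorial : ℕ) : ℂ))⁻¹ *
      (X 0 ^ (γ 0 + n).toNat * X 1 ^ (γ 1 - n).toNat *
        X 2 ^ (γ 2 - n).toNat * X 3 ^ (γ 3 + n).toNat))
      = term ((((γ 0 + n).toNat.factorial * (γ 1 - n).toNat.factorial *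
        (γ 2 - n).toNat.factorial * (γ 3 + n).toNat.factorial : ℕ) : ℂ))⁻¹
        (γ 0 + n).toNat (γ 1 - n).toNat (γ 2 - n).toNat (γ 3 + n).toNat := fun n => rfl
  simp only [hterm]
  refine sum_shift L U _ _ ?_ ?_ ?_
  · rw [pd03]
    rcases max_cases (-γ 0) (-γ 3) with ⟨h1, _⟩ | ⟨h1, _⟩
    · have h : (γ 0 + L).toNat = 0 := by omega
      rw [h]
      simp [term]
    · have h : (γ 3 + L).toNat = 0 := by omega
      rw [h]
      simp [term]
  · rw [pd12]
    rcases min_cases (γ 1) (γ 2) with ⟨h1, _⟩ | ⟨h1, _⟩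
    · have h : (γ 1 - U).toNat = 0 := by omega
      rw [h]
      simp [term]
    · have h : (γ 2 - U).toNat = 0 := by omega
      rw [h]
      simp [term]
  · intro m hm1 hm2
    rw [pd03, pd12]
    have hL0 : -γ 0 ≤ L := le_max_left _ _
    have hL3 : -γ 3 ≤ L := le_max_right _ _
    have hU1 : U ≤ γ 1 := min_le_left _ _
    have hU2 : U ≤ γ 2 := min_le_right _ _
    have ha : (γ 0 + (m + 1)).toNat = (γ 0 + m).toNat + 1 := by omega
    have hb : (γ 1 - m).toNat = (γ 1 - (m + 1)).toNat + 1 := by omega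
    have hc : (γ 2 - m).toNat = (γ 2 - (m + 1)).toNat + 1 := by omega
    have hd : (γ 3 + (m + 1)).toNat = (γ 3 + m).toNat + 1 := by omega
    rw [ha, hb, hc, hd]
    simp only [Nat.add_sub_cancel]
    rw [coef_eq]
end

section
/- For every γ = (γ₁,γ₂,γ₃,γ₄) ∈ ℤ⁴, the Γ-series F_γ satisfies the homogeneity (Euler-type) equations of the Gelfand–Kapranov–Zelevinsky system: z₁·∂F_γ/∂z₁ + z₂·∂F_γ/∂z₂ = (γ₁+γ₂)·F_γ, z₁·∂F_γ/∂z₁ + z₃·∂F_γ/∂z₃ = (γ₁+γ₃)·F_γ, and z₁·∂F_γ/∂z₁ − z₄·∂F_γ/∂z₄ = (γ₁−γ₄)·F_γ, as identities of polynomials in ℂ[z₁,z₂,z₃,z₄]. -/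
open MvPolynomial Finset

lemma Xpow_mul_pred {σ : Type*} [DecidableEq σ] (i : σ) (a : ℕ) :
    (a : MvPolynomial σ ℂ) * (X i * X i ^ (a-1)) = (a : MvPolynomial σ ℂ) * X i ^ a := by
  cases a with
  | zero => simp
  | succ k => rw [Nat.add_sub_cancel, ← pow_succ']

lemma euler0 (c : ℂ) (a b d e : ℕ) :
    X (0:Fin 4) * pderiv 0 (C c * (X 0 ^ a * X 1 ^ b * X 2 ^ d * X 3 ^ e)) =
      C (a:ℂ) * (C c * (X 0 ^ a * X 1 ^ b * X 2 ^ d * X 3 ^ e)) := by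
  have h := Xpow_mul_pred (0 : Fin 4) a
  simp only [map_natCast]
  simp
  linear_combination (C c * X 1 ^ b * X 2 ^ d * X 3 ^ e) * h

lemma euler1 (c : ℂ) (a b d e : ℕ) :
    X (1:Fin 4) * pderiv 1 (C c * (X 0 ^ a * X 1 ^ b * X 2 ^ d * X 3 ^ e)) =
      C (b:ℂ) * (C c * (X 0 ^ a * X 1 ^ b * X 2 ^ d * X 3 ^ e)) := by
  have h := Xpow_mul_pred (1 : Fin 4) b
  simp only [map_natCast]
  simp
  linear_combination (C c * X 0 ^ a * X 2 ^ d * X 3 ^ e) * h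

lemma euler2 (c : ℂ) (a b d e : ℕ) :
    X (2:Fin 4) * pderiv 2 (C c * (X 0 ^ a * X 1 ^ b * X 2 ^ d * X 3 ^ e)) =
      C (d:ℂ) * (C c * (X 0 ^ a * X 1 ^ b * X 2 ^ d * X 3 ^ e)) := by
  have h := Xpow_mul_pred (2 : Fin 4) d
  simp only [map_natCast]
  simp
  linear_combination (C c * X 0 ^ a * X 1 ^ b * X 3 ^ e) * h

lemma euler3 (c : ℂ) (a b d e : ℕ) :
    X (3:Fin 4) * pderiv 3 (C c * (X 0 ^ a * X 1 ^ b * X 2 ^ d * X 3 ^ e)) =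
      C (e:ℂ) * (C c * (X 0 ^ a * X 1 ^ b * X 2 ^ d * X 3 ^ e)) := by
  have h := Xpow_mul_pred (3 : Fin 4) e
  simp only [map_natCast]
  simp
  linear_combination (C c * X 0 ^ a * X 1 ^ b * X 2 ^ d) * h

/-- The Γ-series satisfies the homogeneity (Euler-type) equations of the GKZ system. -/
theorem gammaSeries_gkz_homogeneity (γ : Fin 4 → ℤ) :
    X 0 * pderiv 0 (GammaSeries γ) + X 1 * pderiv 1 (GammaSeries γ) =
      C ((γ 0 + γ 1 : ℤ) : ℂ) * GammaSeries γ ∧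
    X 0 * pderiv 0 (GammaSeries γ) + X 2 * pderiv 2 (GammaSeries γ) =
      C ((γ 0 + γ 2 : ℤ) : ℂ) * GammaSeries γ ∧
    X 0 * pderiv 0 (GammaSeries γ) - X 3 * pderiv 3 (GammaSeries γ) =
      C ((γ 0 - γ 3 : ℤ) : ℂ) * GammaSeries γ := by
  unfold GammaSeries
  simp only [map_sum, Finset.mul_sum, ← Finset.sum_add_distrib, ← Finset.sum_sub_distrib]
  refine ⟨Finset.sum_congr rfl fun n hn => ?_, Finset.sum_congr rfl fun n hn => ?_,
    Finset.sum_congr rfl fun n hn => ?_⟩ <;>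
  · simp only [mem_Icc, max_le_iff, le_min_iff] at hn
    have h0 : (((γ 0 + n).toNat : ℤ)) = γ 0 + n := Int.toNat_of_nonneg (by omega)
    have h1 : (((γ 1 - n).toNat : ℤ)) = γ 1 - n := Int.toNat_of_nonneg (by omega)
    have h2 : (((γ 2 - n).toNat : ℤ)) = γ 2 - n := Int.toNat_of_nonneg (by omega)
    have h3 : (((γ 3 + n).toNat : ℤ)) = γ 3 + n := Int.toNat_of_nonneg (by omega)
    simp only [euler0, euler1, euler2, euler3, ← add_mul, ← sub_mul, ← C_add, ← C_sub]
    congr 2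
    have e0 : (((γ 0 + n).toNat : ℕ) : ℂ) = (γ 0 : ℂ) + (n : ℂ) := by
      exact_mod_cast congrArg (Int.cast : ℤ → ℂ) h0
    have e1 : (((γ 1 - n).toNat : ℕ) : ℂ) = (γ 1 : ℂ) - (n : ℂ) := by
      exact_mod_cast congrArg (Int.cast : ℤ → ℂ) h1
    have e2 : (((γ 2 - n).toNat : ℕ) : ℂ) = (γ 2 : ℂ) - (n : ℂ) := by
      exact_mod_cast congrArg (Int.cast : ℤ → ℂ) h2
    have e3 : (((γ 3 + n).toNat : ℕ) : ℂ) = (γ 3 : ℂ) + (n : ℂ) := by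
      exact_mod_cast congrArg (Int.cast : ℤ → ℂ) h3
    simp only [e0, e1, e2, e3]
    push_cast
    ring
end

section
/- Let γ₁, γ₂, γ₃ be nonnegative integers and γ = (γ₁,γ₂,γ₃,0). For every (z₁,z₂,z₃,z₄) ∈ ℂ⁴ with z₁z₄ = z₂z₃, the evaluation of the Γ-series satisfies F_γ(z₁,z₂,z₃,z₄) = z₁^{γ₁}·z₂^{γ₂}·z₃^{γ₃}·F_γ(1,1,1,1). -/
open MvPolynomial Finset

/-- On the locus `z₁z₄ = z₂z₃` one has
`F_γ(z) = z₁^{γ₁} z₂^{γ₂} z₃^{γ₃} F_γ(1,1,1,1)` for `γ = (γ₁,γ₂,γ₃,0)`. -/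
theorem gammaSeries_eval_on_singular_locus (g1 g2 g3 : ℕ) (z : Fin 4 → ℂ)
    (hz : z 0 * z 3 = z 1 * z 2) :
    MvPolynomial.eval z (GammaSeries ![(g1 : ℤ), g2, g3, 0]) =
      z 0 ^ g1 * z 1 ^ g2 * z 2 ^ g3 *
        MvPolynomial.eval (fun _ => (1 : ℂ)) (GammaSeries ![(g1 : ℤ), g2, g3, 0]) := by
  simp only [GammaSeries, Matrix.cons_val_zero, Matrix.cons_val_one, Matrix.head_cons,
    Matrix.cons_val_two, Matrix.tail_cons, Matrix.cons_val_three, map_sum, map_mul, map_pow,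
    eval_C, eval_X, one_pow, mul_one]
  rw [Finset.mul_sum]
  refine Finset.sum_congr rfl fun n hn => ?_
  simp only [Finset.mem_Icc, max_le_iff, le_min_iff] at hn
  obtain ⟨⟨hn1, hn2⟩, hn3, hn4⟩ := hn
  lift n to ℕ using (by omega : (0:ℤ) ≤ n) with k
  have h0 : ((g1:ℤ) + k).toNat = g1 + k := by omega
  have h1 : ((g2:ℤ) - k).toNat = g2 - k := by omega
  have h2 : ((g3:ℤ) - k).toNat = g3 - k := by omega
  have h3 : ((0:ℤ) + k).toNat = k := by omega
  rw [h0, h1, h2, h3]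
  have hk2 : k ≤ g2 := by omega
  have hk3 : k ≤ g3 := by omega
  have e1 : z 1 ^ (g2 - k) * z 1 ^ k = z 1 ^ g2 := by
    rw [← pow_add, Nat.sub_add_cancel hk2]
  have e2 : z 2 ^ (g3 - k) * z 2 ^ k = z 2 ^ g3 := by
    rw [← pow_add, Nat.sub_add_cancel hk3]
  have key : z 0 ^ (g1 + k) * z 1 ^ (g2 - k) * z 2 ^ (g3 - k) * z 3 ^ k
      = z 0 ^ g1 * z 1 ^ g2 * z 2 ^ g3 := by
    have : z 0 ^ (g1 + k) * z 3 ^ k = z 0 ^ g1 * (z 1 ^ k * z 2 ^ k) := by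
      rw [pow_add, mul_assoc, ← mul_pow, hz, mul_pow]
    calc z 0 ^ (g1 + k) * z 1 ^ (g2 - k) * z 2 ^ (g3 - k) * z 3 ^ k
        = (z 0 ^ (g1 + k) * z 3 ^ k) * (z 1 ^ (g2 - k) * z 2 ^ (g3 - k)) := by ring
      _ = z 0 ^ g1 * (z 1 ^ (g2 - k) * z 1 ^ k) * (z 2 ^ (g3 - k) * z 2 ^ k) := by
          rw [this]; ring
      _ = z 0 ^ g1 * z 1 ^ g2 * z 2 ^ g3 := by rw [e1, e2]
  rw [← key]; ring
end

section
/- Let O denote the differential operator O = ∂²/∂z₁∂z₄ − ∂²/∂z₂∂z₃ acting on ℂ[z₁,z₂,z₃,z₄]. For every γ = (γ₁,γ₂,γ₃,0) ∈ ℤ⁴ with last coordinate zero and every integer k ≥ 1, one has O((z₁z₄ − z₂z₃)^k · F_γ) = (k(k+1) + k(γ₁+γ₂+γ₃)) · (z₁z₄ − z₂z₃)^{k−1} · F_γ. -/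
open MvPolynomial Finset

/-- The hypergeometric operator `O = ∂²/∂z₁∂z₄ − ∂²/∂z₂∂z₃`. -/
noncomputable def hypOp (p : MvPolynomial (Fin 4) ℂ) : MvPolynomial (Fin 4) ℂ :=
  pderiv 0 (pderiv 3 p) - pderiv 1 (pderiv 2 p)

/-!
Write `Δ = z₁z₄ − z₂z₃` and `E = ∑ zᵢ ∂ᵢ` for the Euler operator. Since `O` has order two,
`O Δ = 2` and the polarization of `O` against `Δ` is `E`, induction on `k` gives
`O(Δᵏ q) = Δᵏ O q + k Δᵏ⁻¹ ((k + 1) q + E q)` for every polynomial `q`.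
For `q = F_γ`, `E F_γ = (γ₁ + γ₂ + γ₃ + γ₄) F_γ` because `F_γ` is homogeneous, and `O F_γ = 0`:
written with divided powers `zᵃ/a!` that vanish for `a < 0`, `F_γ` is a sum over all `n ∈ ℤ`,
and `∂₁∂₄` of its `(n+1)`-st term equals `∂₂∂₃` of its `n`-th term.
-/

namespace MvPolynomial

section DividedPow

variable {σ K : Type*} [Field K]

/-- `X i ^ a / a!`, set to `0` for `a < 0` (as `1 / Γ(a + 1)` is), so that
`pderiv_dividedPowX_self` holds without side conditions. -/
noncomputable def dividedPowX (i : σ) (a : ℤ) : MvPolynomial σ K :=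
  if 0 ≤ a then C (a.toNat.factorial : K)⁻¹ * X i ^ a.toNat else 0

lemma dividedPowX_of_neg {i : σ} {a : ℤ} (ha : a < 0) :
    dividedPowX i a = (0 : MvPolynomial σ K) :=
  if_neg ha.not_ge

lemma pderiv_dividedPowX_self [CharZero K] (i : σ) (a : ℤ) :
    pderiv i (dividedPowX i a : MvPolynomial σ K) = dividedPowX i (a - 1) := by
  rcases lt_or_ge 0 a with ha | ha
  · obtain ⟨m, rfl⟩ : ∃ m : ℕ, a = m + 1 := ⟨(a - 1).toNat, by omega⟩
    simp only [dividedPowX, add_sub_cancel_right, Nat.cast_nonneg, if_true,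
      show (0 : ℤ) ≤ m + 1 by omega, Int.toNat_natCast, pderiv_C_mul, pderiv_pow, pderiv_X_self]
    rw [show ((m : ℤ) + 1).toNat = m + 1 by omega, Nat.factorial_succ]
    have h : C ((m : K) + 1)⁻¹ * C ((m : K) + 1) = (1 : MvPolynomial σ K) := by
      rw [← map_mul, inv_mul_cancel₀ (Nat.cast_add_one_ne_zero m), map_one]
    push_cast
    rw [mul_inv, map_mul, show ((m : MvPolynomial σ K) + 1) = C ((m : K) + 1) by simp]
    linear_combination (C (m.factorial : K)⁻¹ * X i ^ m) * h
  · rw [dividedPowX_of_neg (by omega : a - 1 < 0)]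
    rcases ha.lt_or_eq with ha | rfl
    · rw [dividedPowX_of_neg ha, map_zero]
    · simp [dividedPowX]

lemma pderiv_dividedPowX_of_ne {i j : σ} (h : j ≠ i) (a : ℤ) :
    pderiv i (dividedPowX j a : MvPolynomial σ K) = 0 := by
  unfold dividedPowX
  split_ifs <;> simp [pderiv_X_of_ne h]

end DividedPow

noncomputable def eulerOp (σ R : Type*) [Fintype σ] [CommSemiring R] :
    Derivation R (MvPolynomial σ R) (MvPolynomial σ R) :=
  ∑ i : σ, (X i : MvPolynomial σ R) • pderiv i

lemma eulerOp_apply {σ R : Type*} [Fintype σ] [CommSemiring R] (p : MvPolynomial σ R) :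
    eulerOp σ R p = ∑ i, X i * pderiv i p := by
  rw [eulerOp, ← Derivation.coeFnAddMonoidHom_apply, map_sum, Finset.sum_apply]
  rfl

lemma eulerOp_det {R : Type*} [CommRing R] :
    eulerOp (Fin 4) R (X 0 * X 3 - X 1 * X 2) = 2 * (X 0 * X 3 - X 1 * X 2) := by
  simp (disch := decide) only [eulerOp_apply, Fin.sum_univ_four, map_sub, Derivation.leibniz,
    pderiv_X_self, pderiv_X_of_ne, smul_eq_mul, mul_zero, mul_one, add_zero, zero_add]
  ring

end MvPolynomial

noncomputable def gammaTerm (γ : Fin 4 → ℤ) (n : ℤ) : MvPolynomial (Fin 4) ℂ :=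
  dividedPowX 0 (γ 0 + n) * dividedPowX 1 (γ 1 - n) * dividedPowX 2 (γ 2 - n) *
    dividedPowX 3 (γ 3 + n)

lemma support_gammaTerm_subset (γ : Fin 4 → ℤ) :
    Function.support (gammaTerm γ) ⊆ Icc (max (-γ 0) (-γ 3)) (min (γ 1) (γ 2)) := by
  intro n hn
  contrapose! hn
  simp only [coe_Icc, Set.mem_Icc, max_le_iff, le_min_iff, not_and_or, not_le] at hn
  simp only [Function.mem_support, not_not, gammaTerm]
  rcases hn with (h | h) | (h | h)
  · rw [dividedPowX_of_neg (by omega : γ 0 + n < 0)]; ring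
  · rw [dividedPowX_of_neg (by omega : γ 3 + n < 0)]; ring
  · rw [dividedPowX_of_neg (by omega : γ 1 - n < 0)]; ring
  · rw [dividedPowX_of_neg (by omega : γ 2 - n < 0)]; ring

lemma hasFiniteSupport_gammaTerm (γ : Fin 4 → ℤ) : (gammaTerm γ).HasFiniteSupport :=
  (finite_toSet _).subset (support_gammaTerm_subset γ)

lemma gammaSeries_eq_finsum (γ : Fin 4 → ℤ) : GammaSeries γ = ∑ᶠ n, gammaTerm γ n := by
  rw [finsum_eq_sum_of_support_subset _ (support_gammaTerm_subset γ), GammaSeries]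
  refine sum_congr rfl fun n hn => ?_
  simp only [mem_Icc, max_le_iff, le_min_iff] at hn
  simp only [gammaTerm, dividedPowX, if_pos (by omega : 0 ≤ γ 0 + n),
    if_pos (by omega : 0 ≤ γ 1 - n), if_pos (by omega : 0 ≤ γ 2 - n),
    if_pos (by omega : 0 ≤ γ 3 + n), Nat.cast_mul, mul_inv, map_mul]
  ring

lemma pderiv_zero_three_gammaTerm_add_one (γ : Fin 4 → ℤ) (n : ℤ) :
    pderiv 0 (pderiv 3 (gammaTerm γ (n + 1))) = pderiv 1 (pderiv 2 (gammaTerm γ n)) := by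
  simp (disch := decide) only [gammaTerm, Derivation.leibniz, pderiv_dividedPowX_self,
    pderiv_dividedPowX_of_ne, smul_eq_mul, mul_zero, add_zero, zero_add]
  ring_nf

lemma hypOp_gammaSeries (γ : Fin 4 → ℤ) : hypOp (GammaSeries γ) = 0 := by
  have hfin := hasFiniteSupport_gammaTerm γ
  rw [hypOp, gammaSeries_eq_finsum, map_finsum _ hfin, map_finsum _ hfin,
    map_finsum _ (hfin.fun_comp (map_zero _)), map_finsum _ (hfin.fun_comp (map_zero _)),
    sub_eq_zero, ← finsum_comp_equiv (Equiv.addRight 1)]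
  simp only [Equiv.coe_addRight, pderiv_zero_three_gammaTerm_add_one]

lemma isHomogeneous_gammaSeries (γ : Fin 4 → ℤ) :
    (GammaSeries γ).IsHomogeneous (γ 0 + γ 1 + γ 2 + γ 3).toNat := by
  refine IsHomogeneous.sum _ _ _ fun n hn => ?_
  simp only [mem_Icc, max_le_iff, le_min_iff] at hn
  rw [show (γ 0 + γ 1 + γ 2 + γ 3).toNat =
    (γ 0 + n).toNat + (γ 1 - n).toNat + (γ 2 - n).toNat + (γ 3 + n).toNat by omega]
  exact ((((isHomogeneous_X_pow 0 _).mul (isHomogeneous_X_pow 1 _)).mul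
    (isHomogeneous_X_pow 2 _)).mul (isHomogeneous_X_pow 3 _)).C_mul _

lemma eulerOp_gammaSeries (γ : Fin 4 → ℤ) :
    eulerOp (Fin 4) ℂ (GammaSeries γ) = C ((γ 0 + γ 1 + γ 2 + γ 3 : ℤ) : ℂ) * GammaSeries γ := by
  rcases le_or_gt 0 (γ 0 + γ 1 + γ 2 + γ 3) with hs | hs
  · have hcast : ((γ 0 + γ 1 + γ 2 + γ 3).toNat : ℂ) = ((γ 0 + γ 1 + γ 2 + γ 3 : ℤ) : ℂ) := by
      rw [← Int.cast_natCast, Int.toNat_of_nonneg hs]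
    rw [eulerOp_apply, (isHomogeneous_gammaSeries γ).sum_X_mul_pderiv, nsmul_eq_mul, ← hcast,
      map_natCast]
  · rw [GammaSeries, Icc_eq_empty (by omega)]
    simp

lemma hypOp_det_mul (q : MvPolynomial (Fin 4) ℂ) :
    hypOp ((X 0 * X 3 - X 1 * X 2) * q) =
      (X 0 * X 3 - X 1 * X 2) * hypOp q + 2 * q + eulerOp (Fin 4) ℂ q := by
  simp (disch := decide) only [hypOp, eulerOp_apply, Fin.sum_univ_four, map_sub, map_add,
    Derivation.leibniz, pderiv_X_self, pderiv_X_of_ne, smul_eq_mul, map_zero, mul_zero, mul_one,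
    add_zero, zero_add]
  ring

lemma hypOp_det_pow_mul (k : ℕ) (q : MvPolynomial (Fin 4) ℂ) :
    hypOp ((X 0 * X 3 - X 1 * X 2) ^ k * q) =
      (X 0 * X 3 - X 1 * X 2) ^ k * hypOp q +
        (k : MvPolynomial (Fin 4) ℂ) * (X 0 * X 3 - X 1 * X 2) ^ (k - 1) *
          ((k + 1 : MvPolynomial (Fin 4) ℂ) * q + eulerOp (Fin 4) ℂ q) := by
  induction k generalizing q with
  | zero => simp
  | succ k ih =>
    rw [pow_succ, mul_assoc, ih, hypOp_det_mul, Derivation.leibniz, eulerOp_det]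
    rcases k with _ | k
    · simp only [pow_zero, one_mul, Nat.cast_zero, zero_mul, add_zero, smul_eq_mul,
        Nat.cast_one, zero_add]
      ring
    · simp only [smul_eq_mul, Nat.add_sub_cancel]
      push_cast
      ring

theorem hypOp_pow_mul_gammaSeries_general (γ : Fin 4 → ℤ) (hγ : γ 3 = 0) (k : ℕ) :
    hypOp ((X 0 * X 3 - X 1 * X 2) ^ k * GammaSeries γ) =
      C (((k * (k + 1) + k * (γ 0 + γ 1 + γ 2) : ℤ)) : ℂ) *
        ((X 0 * X 3 - X 1 * X 2) ^ (k - 1) * GammaSeries γ) := by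
  rw [hypOp_det_pow_mul, hypOp_gammaSeries, eulerOp_gammaSeries, hγ]
  simp only [add_zero, mul_zero, zero_add, Int.cast_add, Int.cast_mul, Int.cast_natCast, map_add,
    map_mul, map_natCast, map_intCast, Int.cast_one, map_one]
  ring

/-- `O((z₁z₄ − z₂z₃)^k F_γ) = (k(k+1) + k(γ₁+γ₂+γ₃)) (z₁z₄ − z₂z₃)^{k−1} F_γ`. -/
theorem hypOp_pow_mul_gammaSeries (γ : Fin 4 → ℤ) (hγ : γ 3 = 0) (k : ℕ) (hk : 1 ≤ k) :
    hypOp ((X 0 * X 3 - X 1 * X 2) ^ k * GammaSeries γ) =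
      C (((k * (k + 1) + k * (γ 0 + γ 1 + γ 2) : ℤ)) : ℂ) *
        ((X 0 * X 3 - X 1 * X 2) ^ (k - 1) * GammaSeries γ) :=
  hypOp_pow_mul_gammaSeries_general γ hγ k
end

section
/- For every γ = (γ₁,γ₂,γ₃,0) ∈ ℤ⁴ with last coordinate zero, the following contiguity relation holds in ℂ[z₁,z₂,z₃,z₄]: (z₁z₄ − z₂z₃)·F_γ = −(γ₁+γ₂+γ₃+2)·z₃·F_{γ+e₂} + (γ₃+1)(γ₁+γ₃+1)·F_{γ+e₁+e₄}. -/
open MvPolynomial Finset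

namespace GammaAux

noncomputable def Mn (g0 g1 g2 m : ℤ) : MvPolynomial (Fin 4) ℂ :=
  X 0 ^ (g0 + m).toNat * X 1 ^ (g1 + 1 - m).toNat * X 2 ^ (g2 + 1 - m).toNat * X 3 ^ m.toNat

noncomputable def Ec (g0 g1 g2 m : ℤ) : ℂ :=
  ((g0 + m).toNat.factorial : ℂ)⁻¹ * ((g1 + 1 - m).toNat.factorial : ℂ)⁻¹ *
    ((g2 + 1 - m).toNat.factorial : ℂ)⁻¹ * (m.toNat.factorial : ℂ)⁻¹

noncomputable def T1 (g0 g1 g2 m : ℤ) : MvPolynomial (Fin 4) ℂ :=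
  C (((g0 + m : ℤ) : ℂ) * ((m : ℤ) : ℂ) * Ec g0 g1 g2 m) * Mn g0 g1 g2 m

noncomputable def T2 (g0 g1 g2 m : ℤ) : MvPolynomial (Fin 4) ℂ :=
  C (((g1 + 1 - m : ℤ) : ℂ) * ((g2 + 1 - m : ℤ) : ℂ) * Ec g0 g1 g2 m) * Mn g0 g1 g2 m

noncomputable def T3 (g0 g1 g2 m : ℤ) : MvPolynomial (Fin 4) ℂ :=
  C (((g2 + 1 - m : ℤ) : ℂ) * Ec g0 g1 g2 m) * Mn g0 g1 g2 m

noncomputable def T4 (g0 g1 g2 m : ℤ) : MvPolynomial (Fin 4) ℂ :=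
  C (Ec g0 g1 g2 m) * Mn g0 g1 g2 m

lemma key4 (p q r s : ℕ) : ((p.factorial * q.factorial * r.factorial * s.factorial : ℕ) : ℂ)⁻¹
    = ((p.factorial : ℂ))⁻¹ * ((q.factorial : ℂ))⁻¹ * ((r.factorial : ℂ))⁻¹ * ((s.factorial : ℂ))⁻¹ := by
  push_cast [mul_inv]; ring

lemma fs (k : ℕ) : ((k.factorial : ℂ))⁻¹ = ((k : ℂ) + 1) * (((k + 1).factorial : ℂ))⁻¹ := by
  rw [Nat.factorial_succ]
  push_cast [mul_inv]
  rw [← mul_assoc, mul_inv_cancel₀ (by exact_mod_cast Nat.succ_ne_zero k), one_mul]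

lemma sum_shift (a b : ℤ) (f : ℤ → MvPolynomial (Fin 4) ℂ) :
    ∑ n ∈ Finset.Icc a b, f (n + 1) = ∑ m ∈ Finset.Icc (a + 1) (b + 1), f m := by
  rw [← Finset.map_add_right_Icc a b 1, Finset.sum_map]
  simp [addRightEmbedding]

lemma L1 (g0 g1 g2 : ℤ) :
    (X 0 * X 3 : MvPolynomial (Fin 4) ℂ) *
      ∑ n ∈ Finset.Icc (max (-g0) 0) (min g1 g2),
        C ((((g0 + n).toNat.factorial * (g1 - n).toNat.factorial *
            (g2 - n).toNat.factorial * n.toNat.factorial : ℕ) : ℂ))⁻¹ *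
          (X 0 ^ (g0 + n).toNat * X 1 ^ (g1 - n).toNat *
            X 2 ^ (g2 - n).toNat * X 3 ^ n.toNat)
      = ∑ m ∈ Finset.Icc (max (-g0) 0) (min g1 g2 + 1), T1 g0 g1 g2 m := by
  rw [Finset.mul_sum]
  have step : ∀ n ∈ Finset.Icc (max (-g0) 0) (min g1 g2),
      (X 0 * X 3 : MvPolynomial (Fin 4) ℂ) *
        (C ((((g0 + n).toNat.factorial * (g1 - n).toNat.factorial *
            (g2 - n).toNat.factorial * n.toNat.factorial : ℕ) : ℂ))⁻¹ *
          (X 0 ^ (g0 + n).toNat * X 1 ^ (g1 - n).toNat *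
            X 2 ^ (g2 - n).toNat * X 3 ^ n.toNat)) = T1 g0 g1 g2 (n + 1) := by
    intro n hn
    rw [Finset.mem_Icc] at hn
    simp only [T1, Mn, Ec]
    have e0 : (g0 + (n + 1)).toNat = (g0 + n).toNat + 1 := by omega
    have e1 : (g1 + 1 - (n + 1)).toNat = (g1 - n).toNat := by omega
    have e2 : (g2 + 1 - (n + 1)).toNat = (g2 - n).toNat := by omega
    have e3 : (n + 1).toNat = n.toNat + 1 := by omega
    have a0 : ((g0 + (n + 1) : ℤ) : ℂ) = ((g0 + n).toNat : ℂ) + 1 := by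
      have h : (g0 + (n + 1) : ℤ) = ((g0 + n).toNat : ℤ) + 1 := by omega
      rw [h]; push_cast; ring
    have a3 : ((n + 1 : ℤ) : ℂ) = (n.toNat : ℂ) + 1 := by
      have h : (n + 1 : ℤ) = (n.toNat : ℤ) + 1 := by omega
      rw [h]; push_cast; ring
    rw [e0, e1, e2, e3, a0, a3, key4, fs ((g0 + n).toNat), fs n.toNat]
    ring_nf
  rw [Finset.sum_congr rfl step, sum_shift]
  refine Finset.sum_subset (Finset.Icc_subset_Icc (by omega) le_rfl) (fun m hm hnot => ?_)
  rw [Finset.mem_Icc] at hm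
  rw [Finset.mem_Icc] at hnot
  have hz : g0 + m = 0 ∨ m = 0 := by
    rcases max_choice (-g0) 0 with h | h <;> omega
  rcases hz with h | h <;> simp [T1, h]

lemma L2 (g0 g1 g2 : ℤ) :
    (X 1 * X 2 : MvPolynomial (Fin 4) ℂ) *
      ∑ n ∈ Finset.Icc (max (-g0) 0) (min g1 g2),
        C ((((g0 + n).toNat.factorial * (g1 - n).toNat.factorial *
            (g2 - n).toNat.factorial * n.toNat.factorial : ℕ) : ℂ))⁻¹ *
          (X 0 ^ (g0 + n).toNat * X 1 ^ (g1 - n).toNat *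
            X 2 ^ (g2 - n).toNat * X 3 ^ n.toNat)
      = ∑ m ∈ Finset.Icc (max (-g0) 0) (min g1 g2 + 1), T2 g0 g1 g2 m := by
  rw [Finset.mul_sum]
  have step : ∀ n ∈ Finset.Icc (max (-g0) 0) (min g1 g2),
      (X 1 * X 2 : MvPolynomial (Fin 4) ℂ) *
        (C ((((g0 + n).toNat.factorial * (g1 - n).toNat.factorial *
            (g2 - n).toNat.factorial * n.toNat.factorial : ℕ) : ℂ))⁻¹ *
          (X 0 ^ (g0 + n).toNat * X 1 ^ (g1 - n).toNat *
            X 2 ^ (g2 - n).toNat * X 3 ^ n.toNat)) = T2 g0 g1 g2 n := by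
    intro n hn
    rw [Finset.mem_Icc] at hn
    simp only [T2, Mn, Ec]
    have e1 : (g1 + 1 - n).toNat = (g1 - n).toNat + 1 := by omega
    have e2 : (g2 + 1 - n).toNat = (g2 - n).toNat + 1 := by omega
    have a1 : ((g1 + 1 - n : ℤ) : ℂ) = ((g1 - n).toNat : ℂ) + 1 := by
      have h : (g1 + 1 - n : ℤ) = ((g1 - n).toNat : ℤ) + 1 := by omega
      rw [h]; push_cast; ring
    have a2 : ((g2 + 1 - n : ℤ) : ℂ) = ((g2 - n).toNat : ℂ) + 1 := by
      have h : (g2 + 1 - n : ℤ) = ((g2 - n).toNat : ℤ) + 1 := by omega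
      rw [h]; push_cast; ring
    rw [e1, e2, a1, a2, key4, fs ((g1 - n).toNat), fs ((g2 - n).toNat)]
    ring_nf
  rw [Finset.sum_congr rfl step]
  refine Finset.sum_subset (Finset.Icc_subset_Icc le_rfl (by omega)) (fun m hm hnot => ?_)
  rw [Finset.mem_Icc] at hm
  rw [Finset.mem_Icc] at hnot
  have hz : g1 + 1 - m = 0 ∨ g2 + 1 - m = 0 := by
    rcases min_choice g1 g2 with h | h <;> omega
  rcases hz with h | h <;> simp [T2, h]

lemma L3 (g0 g1 g2 : ℤ) :
    (X 2 : MvPolynomial (Fin 4) ℂ) *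
      ∑ n ∈ Finset.Icc (max (-g0) 0) (min (g1 + 1) g2),
        C ((((g0 + n).toNat.factorial * (g1 + 1 - n).toNat.factorial *
            (g2 - n).toNat.factorial * n.toNat.factorial : ℕ) : ℂ))⁻¹ *
          (X 0 ^ (g0 + n).toNat * X 1 ^ (g1 + 1 - n).toNat *
            X 2 ^ (g2 - n).toNat * X 3 ^ n.toNat)
      = ∑ m ∈ Finset.Icc (max (-g0) 0) (min g1 g2 + 1), T3 g0 g1 g2 m := by
  rw [Finset.mul_sum]
  have step : ∀ n ∈ Finset.Icc (max (-g0) 0) (min (g1 + 1) g2),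
      (X 2 : MvPolynomial (Fin 4) ℂ) *
        (C ((((g0 + n).toNat.factorial * (g1 + 1 - n).toNat.factorial *
            (g2 - n).toNat.factorial * n.toNat.factorial : ℕ) : ℂ))⁻¹ *
          (X 0 ^ (g0 + n).toNat * X 1 ^ (g1 + 1 - n).toNat *
            X 2 ^ (g2 - n).toNat * X 3 ^ n.toNat)) = T3 g0 g1 g2 n := by
    intro n hn
    rw [Finset.mem_Icc] at hn
    simp only [T3, Mn, Ec]
    have e2 : (g2 + 1 - n).toNat = (g2 - n).toNat + 1 := by omega
    have a2 : ((g2 + 1 - n : ℤ) : ℂ) = ((g2 - n).toNat : ℂ) + 1 := by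
      have h : (g2 + 1 - n : ℤ) = ((g2 - n).toNat : ℤ) + 1 := by omega
      rw [h]; push_cast; ring
    rw [e2, a2, key4, fs ((g2 - n).toNat)]
    ring_nf
  rw [Finset.sum_congr rfl step]
  refine Finset.sum_subset (Finset.Icc_subset_Icc le_rfl (by omega)) (fun m hm hnot => ?_)
  rw [Finset.mem_Icc] at hm
  rw [Finset.mem_Icc] at hnot
  have hz : g2 + 1 - m = 0 := by omega
  simp [T3, hz]

lemma L4 (g0 g1 g2 : ℤ) :
    (∑ n ∈ Finset.Icc (max (-(g0 + 1)) (-1)) (min g1 g2),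
        C ((((g0 + 1 + n).toNat.factorial * (g1 - n).toNat.factorial *
            (g2 - n).toNat.factorial * (1 + n).toNat.factorial : ℕ) : ℂ))⁻¹ *
          (X 0 ^ (g0 + 1 + n).toNat * X 1 ^ (g1 - n).toNat *
            X 2 ^ (g2 - n).toNat * X 3 ^ (1 + n).toNat))
      = ∑ m ∈ Finset.Icc (max (-g0) 0) (min g1 g2 + 1), T4 g0 g1 g2 m := by
  have step : ∀ n ∈ Finset.Icc (max (-(g0 + 1)) (-1)) (min g1 g2),
      (C ((((g0 + 1 + n).toNat.factorial * (g1 - n).toNat.factorial *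
            (g2 - n).toNat.factorial * (1 + n).toNat.factorial : ℕ) : ℂ))⁻¹ *
          (X 0 ^ (g0 + 1 + n).toNat * X 1 ^ (g1 - n).toNat *
            X 2 ^ (g2 - n).toNat * X 3 ^ (1 + n).toNat) : MvPolynomial (Fin 4) ℂ)
        = T4 g0 g1 g2 (n + 1) := by
    intro n hn
    simp only [T4, Mn, Ec]
    rw [show (g0 + 1 + n : ℤ) = g0 + (n + 1) from by ring_nf,
      show (g1 - n : ℤ) = g1 + 1 - (n + 1) from by ring_nf,
      show (g2 - n : ℤ) = g2 + 1 - (n + 1) from by ring_nf,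
      show (1 + n : ℤ) = n + 1 from by ring_nf, key4]
  rw [Finset.sum_congr rfl step, sum_shift,
    show (max (-(g0 + 1)) (-1) + 1 : ℤ) = max (-g0) 0 from by omega]

end GammaAux

open GammaAux in
/-- The contiguity relation
`(z₁z₄ − z₂z₃) F_γ = −(γ₁+γ₂+γ₃+2) z₃ F_{γ+e₂} + (γ₃+1)(γ₁+γ₃+1) F_{γ+e₁+e₄}`. -/
theorem gammaSeries_contiguity (γ : Fin 4 → ℤ) (hγ : γ 3 = 0) :
    (X 0 * X 3 - X 1 * X 2) * GammaSeries γ =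
      -(C ((γ 0 + γ 1 + γ 2 + 2 : ℤ) : ℂ)) * X 2 * GammaSeries (γ + Pi.single 1 1) +
        C (((γ 2 + 1) * (γ 0 + γ 2 + 1) : ℤ) : ℂ) *
          GammaSeries (γ + Pi.single 0 1 + Pi.single 3 1) := by
  have c20 : (γ + Pi.single 1 1 : Fin 4 → ℤ) 0 = γ 0 := by simp
  have c21 : (γ + Pi.single 1 1 : Fin 4 → ℤ) 1 = γ 1 + 1 := by simp
  have c22 : (γ + Pi.single 1 1 : Fin 4 → ℤ) 2 = γ 2 := by simp
  have c23 : (γ + Pi.single 1 1 : Fin 4 → ℤ) 3 = γ 3 := by simp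
  have c30 : (γ + Pi.single 0 1 + Pi.single 3 1 : Fin 4 → ℤ) 0 = γ 0 + 1 := by simp
  have c31 : (γ + Pi.single 0 1 + Pi.single 3 1 : Fin 4 → ℤ) 1 = γ 1 := by simp
  have c32 : (γ + Pi.single 0 1 + Pi.single 3 1 : Fin 4 → ℤ) 2 = γ 2 := by simp
  have c33 : (γ + Pi.single 0 1 + Pi.single 3 1 : Fin 4 → ℤ) 3 = γ 3 + 1 := by simp
  have hF1 : GammaSeries γ =
      ∑ n ∈ Finset.Icc (max (-γ 0) 0) (min (γ 1) (γ 2)),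
        C ((((γ 0 + n).toNat.factorial * (γ 1 - n).toNat.factorial *
            (γ 2 - n).toNat.factorial * n.toNat.factorial : ℕ) : ℂ))⁻¹ *
          (X 0 ^ (γ 0 + n).toNat * X 1 ^ (γ 1 - n).toNat *
            X 2 ^ (γ 2 - n).toNat * X 3 ^ n.toNat) := by
    rw [GammaSeries]
    simp only [hγ, neg_zero, zero_add]
  have hF2 : GammaSeries (γ + Pi.single 1 1) =
      ∑ n ∈ Finset.Icc (max (-γ 0) 0) (min (γ 1 + 1) (γ 2)),
        C ((((γ 0 + n).toNat.factorial * (γ 1 + 1 - n).toNat.factorial *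
            (γ 2 - n).toNat.factorial * n.toNat.factorial : ℕ) : ℂ))⁻¹ *
          (X 0 ^ (γ 0 + n).toNat * X 1 ^ (γ 1 + 1 - n).toNat *
            X 2 ^ (γ 2 - n).toNat * X 3 ^ n.toNat) := by
    rw [GammaSeries]
    simp only [c20, c21, c22, c23, hγ, neg_zero, zero_add]
  have hF3 : GammaSeries (γ + Pi.single 0 1 + Pi.single 3 1) =
      ∑ n ∈ Finset.Icc (max (-(γ 0 + 1)) (-1)) (min (γ 1) (γ 2)),
        C ((((γ 0 + 1 + n).toNat.factorial * (γ 1 - n).toNat.factorial *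
            (γ 2 - n).toNat.factorial * (1 + n).toNat.factorial : ℕ) : ℂ))⁻¹ *
          (X 0 ^ (γ 0 + 1 + n).toNat * X 1 ^ (γ 1 - n).toNat *
            X 2 ^ (γ 2 - n).toNat * X 3 ^ (1 + n).toNat) := by
    rw [GammaSeries]
    simp only [c30, c31, c32, c33, hγ, zero_add]
  rw [hF1, hF2, hF3, sub_mul, L1, L2,
    mul_assoc (-(C ((γ 0 + γ 1 + γ 2 + 2 : ℤ) : ℂ))) (X 2), L3, L4,
    ← Finset.sum_sub_distrib, Finset.mul_sum, Finset.mul_sum, ← Finset.sum_add_distrib]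
  refine Finset.sum_congr rfl (fun m hm => ?_)
  simp only [T1, T2, T3, T4]
  have hs : ((γ 0 + m : ℤ) : ℂ) * ((m : ℤ) : ℂ) * Ec (γ 0) (γ 1) (γ 2) m -
      ((γ 1 + 1 - m : ℤ) : ℂ) * ((γ 2 + 1 - m : ℤ) : ℂ) * Ec (γ 0) (γ 1) (γ 2) m =
      -((γ 0 + γ 1 + γ 2 + 2 : ℤ) : ℂ) * (((γ 2 + 1 - m : ℤ) : ℂ) * Ec (γ 0) (γ 1) (γ 2) m) +
      (((γ 2 + 1) * (γ 0 + γ 2 + 1) : ℤ) : ℂ) * Ec (γ 0) (γ 1) (γ 2) m := by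
    push_cast; ring
  rw [← sub_mul, ← map_sub, hs]
  simp only [map_add, map_mul, map_neg]
  ring_nf
end

section
/- For all nonnegative integers u, v, w, t and every γ ∈ ℤ⁴, the polynomial z₁^u·z₂^v·z₃^w·z₄^t·F_γ lies in the ℂ-linear span of the set of polynomials {(z₂z₃ − z₁z₄)^p · F_δ : p ∈ ℕ, δ ∈ ℤ⁴} in ℂ[z₁,z₂,z₃,z₄]. -/
/-!
Put `b = (1, -1, -1, 1)` and, for `a ∈ ℤ⁴`, let `x^a/a! = ∏ᵢ X i ^ aᵢ / aᵢ!`, read as `0` as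
soon as some `aᵢ < 0`. Then `F_γ = ∑ₙ x^(γ+nb)/(γ+nb)!` over all `n ∈ ℤ`; set
`Θ_γ = ∑ₙ n · x^(γ+nb)/(γ+nb)!`. The rule `X i · x^a/a! = (aᵢ + 1) · x^(a+eᵢ)/(a+eᵢ)!`, valid
for every `a ∈ ℤ⁴`, gives
  `X i · F_γ = (γᵢ + 1) F_δ + bᵢ Θ_δ` with `δ = γ + eᵢ`, and
  `(X 1 X 2 - X 0 X 3) · F_(δ-e₁-e₂) = (δ₁δ₂ - δ₀δ₃) F_δ - |δ| Θ_δ`,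
where `|δ| = ∑ᵢ δᵢ` and the `X 0 X 3` part needs the shift `n ↦ n - 1`. So `Θ_δ` lies in the
span when `|δ| ≠ 0`, and then so does `X i · F_γ`; when `|δ| = 0`, every term of `F_γ` has
negative degree and `F_γ = 0`. Hence the span is stable under each `X i`: it is an ideal
containing every `F_γ`.
-/

open MvPolynomial Finset

section DividedPow

variable (K : Type*) {A : Type*} [Field K] [Semiring A] [Algebra K A]

def dividedPow (x : A) (e : ℤ) : A :=
  if 0 ≤ e then (e.toNat.factorial : K)⁻¹ • x ^ e.toNat else 0

theorem dividedPow_of_neg (x : A) {e : ℤ} (he : e < 0) : dividedPow K x e = 0 :=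
  if_neg he.not_ge

theorem mul_dividedPow [CharZero K] (x : A) (e : ℤ) :
    x * dividedPow K x e = ((e + 1 : ℤ) : K) • dividedPow K x (e + 1) := by
  obtain he | rfl | he := lt_trichotomy e (-1)
  · rw [dividedPow_of_neg K x (by omega), dividedPow_of_neg K x (by omega), mul_zero, smul_zero]
  · simp [dividedPow_of_neg K x (show (-1 : ℤ) < 0 by omega)]
  · lift e to ℕ using (by omega)
    simp only [dividedPow, Int.toNat_natCast, show ((e : ℤ) + 1).toNat = e + 1 by omega,
      if_pos (by omega : (0 : ℤ) ≤ e), if_pos (by omega : (0 : ℤ) ≤ e + 1), mul_smul_comm,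
      smul_smul, Nat.factorial_succ, pow_succ']
    congr 1
    push_cast
    field_simp

end DividedPow

section DividedMonomial

variable {σ K : Type*} [Fintype σ] [Field K]

noncomputable def dividedMonomial (a : σ → ℤ) : MvPolynomial σ K :=
  ∏ i, dividedPow K (X i) (a i)

theorem dividedMonomial_eq_zero_of_not_nonneg {a : σ → ℤ} (ha : ¬0 ≤ a) :
    dividedMonomial (K := K) a = 0 := by
  obtain ⟨i, hi⟩ : ∃ i, ¬0 ≤ a i := by simpa [Pi.le_def] using ha
  exact prod_eq_zero (mem_univ i) (dividedPow_of_neg K _ (not_le.1 hi))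

theorem X_mul_dividedMonomial [DecidableEq σ] [CharZero K] (i : σ) (a : σ → ℤ) :
    X i * dividedMonomial (K := K) a =
      ((a i + 1 : ℤ) : K) • dividedMonomial (Function.update a i (a i + 1)) := by
  rw [dividedMonomial, dividedMonomial, prod_eq_mul_prod_sdiff_singleton_of_mem (mem_univ i),
    prod_eq_mul_prod_sdiff_singleton_of_mem (mem_univ i), Function.update_self, ← mul_assoc,
    mul_dividedPow, smul_mul_assoc]
  congr 2
  refine prod_congr rfl fun j hj => ?_
  rw [Function.update_of_ne (by simpa using hj)]

end DividedMonomial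

namespace GammaSeries

def b : Fin 4 → ℤ := ![1, -1, -1, 1]

theorem nonneg_add_smul_b_iff (γ : Fin 4 → ℤ) (n : ℤ) :
    0 ≤ γ + n • b ↔ n ∈ Icc (max (-γ 0) (-γ 3)) (min (γ 1) (γ 2)) := by
  simp only [Pi.le_def, Fin.forall_fin_succ, IsEmpty.forall_iff, and_true, mem_Icc, max_le_iff,
    le_min_iff, Pi.zero_apply, Pi.add_apply, Pi.smul_apply, smul_eq_mul, b, Matrix.cons_val,
    Fin.succ_zero_eq_one, Fin.succ_one_eq_two, Fin.reduceSucc]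
  omega

-- `weighted 1 γ` is `F_γ` and `weighted (↑) γ` is `Θ_γ`.
noncomputable def weighted (c : ℤ → ℂ) (γ : Fin 4 → ℤ) : MvPolynomial (Fin 4) ℂ :=
  ∑ᶠ n : ℤ, c n • dividedMonomial (γ + n • b)

theorem support_summand_subset_Icc (c : ℤ → ℂ) (γ : Fin 4 → ℤ) :
    (Function.support fun n => c n • dividedMonomial (K := ℂ) (γ + n • b)) ⊆
      Icc (max (-γ 0) (-γ 3)) (min (γ 1) (γ 2)) := by
  intro n hn
  by_contra h
  exact hn (by
    simp only [dividedMonomial_eq_zero_of_not_nonneg ((nonneg_add_smul_b_iff γ n).not.2 h),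
      smul_zero])

theorem hasFiniteSupport_summand (c : ℤ → ℂ) (γ : Fin 4 → ℤ) :
    Function.HasFiniteSupport fun n => c n • dividedMonomial (K := ℂ) (γ + n • b) :=
  (finite_toSet _).subset (support_summand_subset_Icc c γ)

theorem gammaSeries_eq_weighted_one (γ : Fin 4 → ℤ) : GammaSeries γ = weighted 1 γ := by
  rw [weighted, finsum_eq_sum_of_support_subset _ (support_summand_subset_Icc 1 γ), GammaSeries]
  refine sum_congr rfl fun n hn => ?_
  have hnonneg (i : Fin 4) : 0 ≤ (γ + n • b) i := (nonneg_add_smul_b_iff γ n).2 hn i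
  simp only [dividedMonomial, Fin.prod_univ_four, dividedPow, hnonneg, if_true, smul_eq_C_mul,
    Nat.cast_mul, mul_inv, map_mul, Pi.one_apply, map_one, one_mul]
  simp only [b, Pi.add_apply, Pi.smul_apply, smul_eq_mul, Matrix.cons_val_zero,
    Matrix.cons_val_one, Matrix.cons_val, mul_one, mul_neg, sub_eq_add_neg]
  ring

theorem X_mul_weighted (i : Fin 4) (c : ℤ → ℂ) (γ : Fin 4 → ℤ) :
    X i * weighted c γ =
      weighted (fun n => c n * ((γ i + n * b i + 1 : ℤ) : ℂ)) (Function.update γ i (γ i + 1)) := by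
  rw [weighted, mul_finsum]
  refine finsum_congr fun n => ?_
  have hupdate : Function.update (γ + n • b) i ((γ + n • b) i + 1) =
      Function.update γ i (γ i + 1) + n • b := by
    rw [Pi.add_apply, add_right_comm, Function.update_add, Function.update_eq_self]
  rw [mul_smul_comm, X_mul_dividedMonomial, smul_smul, hupdate]
  simp

theorem weighted_add_b (c : ℤ → ℂ) (γ : Fin 4 → ℤ) :
    weighted c (γ + b) = weighted (fun n => c (n - 1)) γ := by
  rw [weighted, weighted,
    ← finsum_comp_equiv (Equiv.addRight (1 : ℤ)) (f := fun n => c (n - 1) • _)]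
  refine finsum_congr fun n => ?_
  simp [add_smul, add_assoc, add_comm b]

theorem weighted_sub (c d : ℤ → ℂ) (γ : Fin 4 → ℤ) :
    weighted (fun n => c n - d n) γ = weighted c γ - weighted d γ := by
  simp only [weighted, sub_smul]
  exact finsum_sub_distrib (hasFiniteSupport_summand c γ) (hasFiniteSupport_summand d γ)

theorem weighted_affine (α β : ℂ) (γ : Fin 4 → ℤ) :
    weighted (fun n => α + β * n) γ = α • weighted 1 γ + β • weighted (↑) γ := by
  simp only [weighted, add_smul, mul_smul, smul_finsum, Pi.one_apply, one_smul]
  exact finsum_add_distrib (hasFiniteSupport_summand (fun _ => α) γ)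
    (by simpa [mul_smul] using hasFiniteSupport_summand (fun n => β * n) γ)

theorem weighted_eq_zero_of_sum_neg (c : ℤ → ℂ) {γ : Fin 4 → ℤ} (hγ : ∑ i, γ i < 0) :
    weighted c γ = 0 := by
  refine finsum_eq_zero_of_forall_eq_zero fun n => ?_
  have hneg : ¬0 ≤ γ + n • b := by
    rw [nonneg_add_smul_b_iff, mem_Icc, max_le_iff, le_min_iff]
    rw [Fin.sum_univ_four] at hγ
    omega
  rw [dividedMonomial_eq_zero_of_not_nonneg hneg, smul_zero]

theorem X_mul_gammaSeries (i : Fin 4) (γ : Fin 4 → ℤ) :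
    X i * GammaSeries γ =
      ((γ i + 1 : ℤ) : ℂ) • GammaSeries (Function.update γ i (γ i + 1)) +
        (b i : ℂ) • weighted (↑) (Function.update γ i (γ i + 1)) := by
  rw [gammaSeries_eq_weighted_one, X_mul_weighted, gammaSeries_eq_weighted_one, ← weighted_affine]
  congr 1
  funext n
  push_cast [Pi.one_apply]
  ring

theorem X1X2_sub_X0X3_mul_gammaSeries (δ : Fin 4 → ℤ) :
    (X 1 * X 2 - X 0 * X 3) * GammaSeries (δ - ![0, 1, 1, 0]) =
      ((δ 1 * δ 2 - δ 0 * δ 3 : ℤ) : ℂ) • GammaSeries δ -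
        ((∑ i, δ i : ℤ) : ℂ) • weighted (↑) δ := by
  have h12 : X 1 * X 2 * GammaSeries (δ - ![0, 1, 1, 0]) =
      weighted (fun n => (((δ 1 - n) * (δ 2 - n) : ℤ) : ℂ)) δ := by
    rw [mul_assoc, gammaSeries_eq_weighted_one, X_mul_weighted, X_mul_weighted]
    congr 1
    · funext n
      simp only [Pi.one_apply, Pi.sub_apply, b, Matrix.cons_val,
        Function.update_of_ne (show (1 : Fin 4) ≠ 2 by decide)]
      push_cast
      ring
    · ext j
      fin_cases j <;> simp [Matrix.vecHead, Matrix.vecTail]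
  have h03 : X 0 * X 3 * GammaSeries (δ - ![0, 1, 1, 0]) =
      weighted (fun n => (((δ 0 + n) * (δ 3 + n) : ℤ) : ℂ)) δ := by
    rw [mul_assoc, gammaSeries_eq_weighted_one, X_mul_weighted, X_mul_weighted]
    convert weighted_add_b _ δ using 2
    · ext j
      fin_cases j <;> simp [b, Matrix.vecHead, Matrix.vecTail] <;> ring
    · funext n
      simp only [Pi.one_apply, Pi.sub_apply, b, Matrix.cons_val,
        Function.update_of_ne (show (0 : Fin 4) ≠ 3 by decide)]
      push_cast
      ring
  rw [sub_mul, h12, h03, ← weighted_sub, gammaSeries_eq_weighted_one, sub_eq_add_neg, ← neg_smul,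
    ← weighted_affine]
  congr 1
  funext n
  push_cast [Fin.sum_univ_four]
  ring

end GammaSeries

theorem Submodule.mul_mem_span_of_forall_mul_mem {R A : Type*} [CommSemiring R] [Semiring A]
    [Algebra R A] {S : Set A} {r : A} (hS : ∀ s ∈ S, r * s ∈ Submodule.span R S) {p : A}
    (hp : p ∈ Submodule.span R S) : r * p ∈ Submodule.span R S :=
  (Submodule.span_le (p := (Submodule.span R S).comap (LinearMap.mulLeft R r))).2 hS hp

theorem MvPolynomial.mul_mem_of_forall_X_mul_mem {σ R : Type*} [CommSemiring R]
    {N : Submodule R (MvPolynomial σ R)} (hN : ∀ i, ∀ p ∈ N, X i * p ∈ N)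
    (q : MvPolynomial σ R) {p : MvPolynomial σ R} (hp : p ∈ N) : q * p ∈ N := by
  induction q using MvPolynomial.induction_on generalizing p with
  | C a => simpa [C_mul'] using N.smul_mem a hp
  | add q₁ q₂ h₁ h₂ => rw [add_mul]; exact N.add_mem (h₁ hp) (h₂ hp)
  | mul_X q i h => rw [mul_assoc]; exact h (hN i p hp)

namespace GammaSeries

noncomputable def gammaSpan : Submodule ℂ (MvPolynomial (Fin 4) ℂ) :=
  Submodule.span ℂ { p | ∃ (k : ℕ) (δ : Fin 4 → ℤ),
    p = (X 1 * X 2 - X 0 * X 3) ^ k * GammaSeries δ }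

theorem gammaSeries_mem_gammaSpan (δ : Fin 4 → ℤ) : GammaSeries δ ∈ gammaSpan :=
  Submodule.subset_span ⟨0, δ, by rw [pow_zero, one_mul]⟩

theorem pow_mul_mem_gammaSpan (k : ℕ) {p : MvPolynomial (Fin 4) ℂ} (hp : p ∈ gammaSpan) :
    (X 1 * X 2 - X 0 * X 3) ^ k * p ∈ gammaSpan := by
  refine Submodule.mul_mem_span_of_forall_mul_mem ?_ hp
  rintro _ ⟨j, δ, rfl⟩
  exact Submodule.subset_span ⟨k + j, δ, by rw [← mul_assoc, ← pow_add]⟩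

theorem weighted_coe_mem_gammaSpan {δ : Fin 4 → ℤ} (hδ : ∑ i, δ i ≠ 0) :
    weighted (↑) δ ∈ gammaSpan := by
  have hsmul : ((∑ i, δ i : ℤ) : ℂ) • weighted (↑) δ =
      ((δ 1 * δ 2 - δ 0 * δ 3 : ℤ) : ℂ) • GammaSeries δ -
        (X 1 * X 2 - X 0 * X 3) ^ 1 * GammaSeries (δ - ![0, 1, 1, 0]) := by
    rw [pow_one, X1X2_sub_X0X3_mul_gammaSeries, sub_sub_cancel]
  rw [← gammaSpan.smul_mem_iff (Int.cast_ne_zero.2 hδ : ((∑ i, δ i : ℤ) : ℂ) ≠ 0), hsmul]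
  exact gammaSpan.sub_mem (gammaSpan.smul_mem _ (gammaSeries_mem_gammaSpan δ))
    (pow_mul_mem_gammaSpan 1 (gammaSeries_mem_gammaSpan _))

theorem X_mul_gammaSeries_mem_gammaSpan (i : Fin 4) (γ : Fin 4 → ℤ) :
    X i * GammaSeries γ ∈ gammaSpan := by
  by_cases hγ : ∑ j, γ j = -1
  · rw [gammaSeries_eq_weighted_one, weighted_eq_zero_of_sum_neg _ (by omega), mul_zero]
    exact gammaSpan.zero_mem
  · have hsum : ∑ j, Function.update γ i (γ i + 1) j = ∑ j, γ j + 1 := by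
      rw [sum_update_of_mem (mem_univ i), sum_eq_add_sum_sdiff_singleton_of_mem (mem_univ i) γ]
      ring
    rw [X_mul_gammaSeries]
    exact gammaSpan.add_mem (gammaSpan.smul_mem _ (gammaSeries_mem_gammaSpan _))
      (gammaSpan.smul_mem _ (weighted_coe_mem_gammaSpan (by omega)))

theorem X_mul_mem_gammaSpan (i : Fin 4) {p : MvPolynomial (Fin 4) ℂ} (hp : p ∈ gammaSpan) :
    X i * p ∈ gammaSpan := by
  refine Submodule.mul_mem_span_of_forall_mul_mem ?_ hp
  rintro _ ⟨k, δ, rfl⟩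
  rw [mul_left_comm]
  exact pow_mul_mem_gammaSpan k (X_mul_gammaSeries_mem_gammaSpan i δ)

end GammaSeries

/-- Every monomial multiple of a Γ-series lies in the span of the
`(z₂z₃ − z₁z₄)^p F_δ`. -/
theorem monomial_mul_gammaSeries_mem_span (u v w t : ℕ) (γ : Fin 4 → ℤ) :
    X 0 ^ u * X 1 ^ v * X 2 ^ w * X 3 ^ t * GammaSeries γ ∈
      Submodule.span ℂ { p : MvPolynomial (Fin 4) ℂ |
        ∃ (k : ℕ) (δ : Fin 4 → ℤ),
          p = (X 1 * X 2 - X 0 * X 3) ^ k * GammaSeries δ } :=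
  MvPolynomial.mul_mem_of_forall_X_mul_mem (fun i _ => GammaSeries.X_mul_mem_gammaSpan i) _
    (GammaSeries.gammaSeries_mem_gammaSpan γ)
end

section
/- For all nonnegative integers u, v, w, t, the monomial z₁^u·z₂^v·z₃^w·z₄^t lies in the ℂ-linear span of the set of polynomials {(z₂z₃ − z₁z₄)^p · F_δ : p ∈ ℕ, δ ∈ ℤ⁴} in ℂ[z₁,z₂,z₃,z₄]. -/
open MvPolynomial Finset

namespace GammaAux
noncomputable def mono (u v w t : ℕ) : MvPolynomial (Fin 4) ℂ :=
  X 0 ^ u * X 1 ^ v * X 2 ^ w * X 3 ^ t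
def S : Set (MvPolynomial (Fin 4) ℂ) :=
  { p : MvPolynomial (Fin 4) ℂ |
    ∃ (k : ℕ) (δ : Fin 4 → ℤ),
      p = (X 1 * X 2 - X 0 * X 3) ^ k * GammaSeries δ }
noncomputable def M : Submodule ℂ (MvPolynomial (Fin 4) ℂ) := Submodule.span ℂ S
lemma gamma_mem (δ : Fin 4 → ℤ) : GammaSeries δ ∈ M :=
  Submodule.subset_span ⟨0, δ, by rw [pow_zero, one_mul]⟩
lemma D_mul_mem {q : MvPolynomial (Fin 4) ℂ} (hq : q ∈ M) :
    (X 1 * X 2 - X 0 * X 3) * q ∈ M := by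
  induction hq using Submodule.span_induction with
  | mem p hp =>
    obtain ⟨k, δ, rfl⟩ := hp
    exact Submodule.subset_span ⟨k + 1, δ, by ring⟩
  | zero => simp
  | add a b _ _ ha hb => rw [mul_add]; exact M.add_mem ha hb
  | smul c a _ ha => rw [Algebra.mul_smul_comm]; exact M.smul_mem c ha
lemma step (u v w t : ℕ) (h : mono u v w t ∈ M) :
    mono u (v + 1) (w + 1) t - mono (u + 1) v w (t + 1) ∈ M := by
  have h2 := D_mul_mem h
  have he : (X 1 * X 2 - X 0 * X 3) * mono u v w t
      = mono u (v + 1) (w + 1) t - mono (u + 1) v w (t + 1) := by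
    simp only [mono]; ring
  rwa [he] at h2

lemma key : ∀ (L u v w t : ℕ), min u t + min v w = L → mono u v w t ∈ M := by
  intro L
  induction L using Nat.strong_induction_on with
  | _ L IH =>
  intro u v w t hL
  have IH' : ∀ u' v' w' t' : ℕ, min u' t' + min v' w' < L → mono u' v' w' t' ∈ M := by
    intro u' v' w' t' h
    exact IH _ h u' v' w' t' rfl
  -- congruences within the coset
  have congP : ∀ j : ℕ, j ≤ min v w →
      mono (u + j) (v - j) (w - j) (t + j) - mono u v w t ∈ M := by
    intro j
    induction j with
    | zero => intro _; simp
    | succ j ihj =>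
      intro hj
      have hj' : j ≤ min v w := by omega
      have hlt : min (u + j) (t + j) + min (v - j - 1) (w - j - 1) < L := by omega
      have hs := step (u + j) (v - j - 1) (w - j - 1) (t + j) (IH' _ _ _ _ hlt)
      have e1 : v - j - 1 + 1 = v - j := by omega
      have e2 : w - j - 1 + 1 = w - j := by omega
      rw [e1, e2] at hs
      have e3 : v - (j + 1) = v - j - 1 := by omega
      have e4 : w - (j + 1) = w - j - 1 := by omega
      rw [e3, e4, show u + (j + 1) = u + j + 1 from rfl, show t + (j + 1) = t + j + 1 from rfl]
      have := M.sub_mem (ihj hj') hs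
      have he : mono (u + j) (v - j) (w - j) (t + j) - mono u v w t -
          (mono (u + j) (v - j) (w - j) (t + j) - mono (u + j + 1) (v - j - 1) (w - j - 1) (t + j + 1))
          = mono (u + j + 1) (v - j - 1) (w - j - 1) (t + j + 1) - mono u v w t := by ring
      rwa [he] at this
  have congM : ∀ j : ℕ, j ≤ min u t →
      mono (u - j) (v + j) (w + j) (t - j) - mono u v w t ∈ M := by
    intro j
    induction j with
    | zero => intro _; simp
    | succ j ihj =>
      intro hj
      have hj' : j ≤ min u t := by omega
      have hlt : min (u - j - 1) (t - j - 1) + min (v + j) (w + j) < L := by omega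
      have hs := step (u - j - 1) (v + j) (w + j) (t - j - 1) (IH' _ _ _ _ hlt)
      have e1 : u - j - 1 + 1 = u - j := by omega
      have e2 : t - j - 1 + 1 = t - j := by omega
      rw [e1, e2] at hs
      have e3 : u - (j + 1) = u - j - 1 := by omega
      have e4 : t - (j + 1) = t - j - 1 := by omega
      rw [e3, e4, show v + (j + 1) = v + j + 1 from rfl, show w + (j + 1) = w + j + 1 from rfl]
      have := M.add_mem hs (ihj hj')
      have he : mono (u - j - 1) (v + j + 1) (w + j + 1) (t - j - 1) - mono (u - j) (v + j) (w + j) (t - j)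
          + (mono (u - j) (v + j) (w + j) (t - j) - mono u v w t)
          = mono (u - j - 1) (v + j + 1) (w + j + 1) (t - j - 1) - mono u v w t := by ring
      rwa [he] at this
  have congZ : ∀ n : ℤ, n ∈ Finset.Icc (max (-(u : ℤ)) (-(t : ℤ))) (min (v : ℤ) (w : ℤ)) →
      mono ((u : ℤ) + n).toNat ((v : ℤ) - n).toNat ((w : ℤ) - n).toNat ((t : ℤ) + n).toNat
        - mono u v w t ∈ M := by
    intro n hn
    rw [Finset.mem_Icc] at hn
    rcases le_or_gt 0 n with hn0 | hn0
    · obtain ⟨j, rfl⟩ := Int.eq_ofNat_of_zero_le hn0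
      have e1 : ((u : ℤ) + j).toNat = u + j := by omega
      have e2 : ((v : ℤ) - j).toNat = v - j := by omega
      have e3 : ((w : ℤ) - j).toNat = w - j := by omega
      have e4 : ((t : ℤ) + j).toNat = t + j := by omega
      rw [e1, e2, e3, e4]
      exact congP j (by omega)
    · obtain ⟨j, rfl⟩ : ∃ j : ℕ, n = -(j : ℤ) :=
        ⟨(-n).toNat, by omega⟩
      have e1 : ((u : ℤ) + -(j : ℤ)).toNat = u - j := by omega
      have e2 : ((v : ℤ) - -(j : ℤ)).toNat = v + j := by omega
      have e3 : ((w : ℤ) - -(j : ℤ)).toNat = w + j := by omega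
      have e4 : ((t : ℤ) + -(j : ℤ)).toNat = t - j := by omega
      rw [e1, e2, e3, e4]
      exact congM j (by omega)
  -- assemble
  set I : Finset ℤ := Finset.Icc (max (-(u : ℤ)) (-(t : ℤ))) (min (v : ℤ) (w : ℤ)) with hI
  set c : ℤ → ℕ := fun n => (((u : ℤ) + n).toNat.factorial * ((v : ℤ) - n).toNat.factorial *
      ((w : ℤ) - n).toNat.factorial * ((t : ℤ) + n).toNat.factorial) with hc
  set T : ℂ := ∑ n ∈ I, ((c n : ℂ))⁻¹ with hT
  have hGdef : GammaSeries ![(u : ℤ), v, w, t] =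
      ∑ n ∈ I, ((c n : ℂ))⁻¹ •
        mono ((u : ℤ) + n).toNat ((v : ℤ) - n).toNat ((w : ℤ) - n).toNat ((t : ℤ) + n).toNat := by
    simp only [GammaSeries, Matrix.cons_val_zero, Matrix.cons_val_one, Matrix.head_cons,
      Matrix.cons_val_two, Matrix.tail_cons, Matrix.cons_val_three, mono, hI, hc,
      smul_eq_C_mul]
  have hsum : GammaSeries ![(u : ℤ), v, w, t] - T • mono u v w t =
      ∑ n ∈ I, ((c n : ℂ))⁻¹ •
        (mono ((u : ℤ) + n).toNat ((v : ℤ) - n).toNat ((w : ℤ) - n).toNat ((t : ℤ) + n).toNat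
          - mono u v w t) := by
    rw [hGdef, hT, Finset.sum_smul]
    rw [← Finset.sum_sub_distrib]
    congr 1
    ext n
    rw [smul_sub]
  have hmemsum : GammaSeries ![(u : ℤ), v, w, t] - T • mono u v w t ∈ M := by
    rw [hsum]
    exact M.sum_mem fun n hn => M.smul_mem _ (congZ n hn)
  have hTmem : T • mono u v w t ∈ M := by
    have := M.sub_mem (gamma_mem ![(u : ℤ), v, w, t]) hmemsum
    simpa using this
  have hTne : T ≠ 0 := by
    have hQ : T = ((∑ n ∈ I, ((c n : ℚ))⁻¹ : ℚ) : ℂ) := by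
      rw [hT]
      push_cast
      rfl
    rw [hQ, Ne, Rat.cast_eq_zero]
    have hne : (0 : ℤ) ∈ I := by
      rw [hI, Finset.mem_Icc]
      constructor <;> omega
    have hpos : (0 : ℚ) < ∑ n ∈ I, ((c n : ℚ))⁻¹ := by
      apply Finset.sum_pos
      · intro n _
        have : 0 < c n := by
          simp only [hc]
          positivity
        positivity
      · exact ⟨0, hne⟩
    exact ne_of_gt hpos
  have := M.smul_mem T⁻¹ hTmem
  rwa [smul_smul, inv_mul_cancel₀ hTne, one_smul] at this

end GammaAux

/-- Every monomial lies in the span of the `(z₂z₃ − z₁z₄)^p F_δ`. -/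
theorem monomial_mem_span (u v w t : ℕ) :
    X 0 ^ u * X 1 ^ v * X 2 ^ w * X 3 ^ t ∈
      Submodule.span ℂ { p : MvPolynomial (Fin 4) ℂ |
        ∃ (k : ℕ) (δ : Fin 4 → ℤ),
          p = (X 1 * X 2 - X 0 * X 3) ^ k * GammaSeries δ } := by
  exact GammaAux.key (min u t + min v w) u v w t rfl
end

section
/- Let R = ℂ[A_{jk}, B_{jk} : 1 ≤ j,k ≤ 3] be the polynomial ring in the entries of two 3×3 matrices of indeterminates A and B (j is the row index, k the column index). Define the derivations E_{i,j} := ∑_{k=1}^{3} (A_{k i}·∂/∂A_{k j} + B_{k i}·∂/∂B_{k j}) on R, the operator ∇̃ := (E_{1,1} − E_{2,2} + 1)∘E_{3,1} + E_{3,2}∘E_{2,1} (where 1 is the identity operator), and the elements a₁ := A_{11}, a₃ := A_{13}, b₁ := B_{11}, b₃ := B_{13}, a₁₂ := A_{11}A_{22} − A_{12}A_{21}, b₁₂ := B_{11}B_{22} − B_{12}B_{21}, (ab)₁₂ := A_{11}B_{12} − A_{12}B_{11}, (aab) := det of the 3×3 matrix with rows (A_{11},A_{12},A_{13}), (A_{21},A_{22},A_{23}),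 (B_{11},B_{12},B_{13}), and (abb) := det of the 3×3 matrix with rows (A_{11},A_{12},A_{13}), (B_{11},B_{12},B_{13}), (B_{21},B_{22},B_{23}). Then for all nonnegative integers α, β, γ, δ, ω, setting g := a₁^α·b₁^β·a₁₂^γ·b₁₂^δ·(ab)₁₂^ω, one has ∇̃(g) = (α+β+γ+δ+ω+1)·(α·a₃·a₁^{α−1}·b₁^β·a₁₂^γ·b₁₂^δ·(ab)₁₂^ω + β·b₃·a₁^α·b₁^{β−1}·a₁₂^γ·b₁₂^δ·(ab)₁₂^ω) − β·γ·(aab)·a₁^α·b₁^{β−1}·a₁₂^{γ−1}·b₁₂^δ·(ab)₁₂^ω − α·δ·(abb)·a₁^{α−1}·b₁^β·a₁₂^γ·b₁₂^{δ−1}·(ab)₁₂^ω, where any term whose integer coefficient (α, β, β·γ, or α·δ) vanishes is understood to be zero (so negative exponents never occur in nonzero terms). -/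
/-! The `E_{ij}` are derivations satisfying the `gl₃` relations
`[E_{ij}, E_{kl}] = δ_{jk} E_{il} - δ_{li} E_{kj}`, which turn `∇̃` into
`E_{31}(E_{11} - E_{22}) + E_{32}E_{21}`. Split `g = f h` with `f = a₁^α b₁^β` and `h` the monomial in
the three `2 × 2` minors: `E_{32} f = 0`, `E_{21} h = 0`, and `f`, `h` have weights `α + β` and `0`
for `E_{11} - E_{22}`, so `∇̃(f h) = (α+β+1) E_{31}f · h + (α+β) f E_{31}h + E_{21}f · E_{32}h`.
The last two terms regroup as `α a₁^{α-1} b₁^β (A_{11}E_{31} + A_{12}E_{32}) h` plus the same with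
`b₁`, `B`; by cofactor expansion, `w₁E_{31} + w₂E_{32}` sends the minor of rows `u, v` to
`w₃ · minor - det(w, u, v)`, and these determinants vanish except for `(aab)` and `(abb)`.
-/

open MvPolynomial Finset

/-- Entry `A_{jk}` (row `j`, column `k`) of the first matrix of indeterminates. -/
noncomputable abbrev A (j k : Fin 3) : MvPolynomial (Fin 2 × Fin 3 × Fin 3) ℂ :=
  X ((0 : Fin 2), j, k)

/-- Entry `B_{jk}` (row `j`, column `k`) of the second matrix of indeterminates. -/
noncomputable abbrev B (j k : Fin 3) : MvPolynomial (Fin 2 × Fin 3 × Fin 3) ℂ :=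
  X ((1 : Fin 2), j, k)

/-- The derivation `E_{i,j} = ∑ₖ (A_{ki} ∂/∂A_{kj} + B_{ki} ∂/∂B_{kj})`
(indices `i j : Fin 3` are `0`-based). -/
noncomputable def E (i j : Fin 3) (p : MvPolynomial (Fin 2 × Fin 3 × Fin 3) ℂ) :
    MvPolynomial (Fin 2 × Fin 3 × Fin 3) ℂ :=
  ∑ k : Fin 3,
    (A k i * pderiv ((0 : Fin 2), k, j) p + B k i * pderiv ((1 : Fin 2), k, j) p)

/-- The operator `∇̃ = (E₁₁ − E₂₂ + 1)E₃₁ + E₃₂E₂₁` (1-based indices). -/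
noncomputable def nablaT (p : MvPolynomial (Fin 2 × Fin 3 × Fin 3) ℂ) :
    MvPolynomial (Fin 2 × Fin 3 × Fin 3) ℂ :=
  E 0 0 (E 2 0 p) - E 1 1 (E 2 0 p) + E 2 0 p + E 2 1 (E 1 0 p)

noncomputable abbrev a₁ := A 0 0
noncomputable abbrev a₃ := A 0 2
noncomputable abbrev b₁ := B 0 0
noncomputable abbrev b₃ := B 0 2
noncomputable abbrev a₁₂ := A 0 0 * A 1 1 - A 0 1 * A 1 0
noncomputable abbrev b₁₂ := B 0 0 * B 1 1 - B 0 1 * B 1 0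
noncomputable abbrev ab₁₂ := A 0 0 * B 0 1 - A 0 1 * B 0 0
noncomputable abbrev aab : MvPolynomial (Fin 2 × Fin 3 × Fin 3) ℂ :=
  Matrix.det !![A 0 0, A 0 1, A 0 2; A 1 0, A 1 1, A 1 2; B 0 0, B 0 1, B 0 2]
noncomputable abbrev abb : MvPolynomial (Fin 2 × Fin 3 × Fin 3) ℂ :=
  Matrix.det !![A 0 0, A 0 1, A 0 2; B 0 0, B 0 1, B 0 2; B 1 0, B 1 1, B 1 2]

local notation "P" => MvPolynomial (Fin 2 × Fin 3 × Fin 3) ℂ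

theorem natCast_mul_pow_sub_one_mul {S : Type*} [CommSemiring S] (n : ℕ) (x : S) :
    (n : S) * x ^ (n - 1) * x = n * x ^ n := by
  cases n <;> simp [pow_succ, mul_assoc]

theorem Derivation.apply_pow_of_apply_eq_mul_sub {R S : Type*} [CommSemiring R] [CommRing S]
    [Algebra R S] (D : Derivation R S S) {x c r : S} (h : D x = c * x - r) (n : ℕ) :
    D (x ^ n) = n * c * x ^ n - n * x ^ (n - 1) * r := by
  rw [D.leibniz_pow, h, nsmul_eq_mul, smul_eq_mul]
  linear_combination c * natCast_mul_pow_sub_one_mul n x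

noncomputable def Ederiv (i j : Fin 3) : Derivation ℂ P P :=
  ∑ k : Fin 3, (A k i • pderiv ((0 : Fin 2), k, j) + B k i • pderiv ((1 : Fin 2), k, j))

theorem E_eq_Ederiv (i j : Fin 3) : E i j = Ederiv i j := by
  funext p
  simp [E, Ederiv, Fin.sum_univ_three]

theorem Ederiv_X (i j : Fin 3) (c : Fin 2) (r s : Fin 3) :
    Ederiv i j (X (c, r, s)) = if s = j then X (c, r, i) else 0 := by
  fin_cases c <;> fin_cases r <;> by_cases hs : s = j <;>
    simp [Ederiv, Fin.sum_univ_three, hs]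

theorem Ederiv_lie (i j k l : Fin 3) :
    ⁅Ederiv i j, Ederiv k l⁆ =
      (if j = k then Ederiv i l else 0) - (if l = i then Ederiv k j else 0) := by
  refine derivation_ext fun ⟨c, r, s⟩ => ?_
  rw [Derivation.commutator_apply, Ederiv_X, Ederiv_X]
  split_ifs <;> subst_vars <;> simp_all [Ederiv_X, eq_comm]

theorem Ederiv_comm_apply (i j k l : Fin 3) (p : P) :
    Ederiv i j (Ederiv k l p) - Ederiv k l (Ederiv i j p) =
      (if j = k then Ederiv i l p else 0) - (if l = i then Ederiv k j p else 0) := by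
  rw [← Derivation.commutator_apply, Ederiv_lie]
  split_ifs <;> rfl

theorem nablaT_eq (p : P) :
    nablaT p = Ederiv 2 0 ((Ederiv 0 0 - Ederiv 1 1) p) + Ederiv 2 1 (Ederiv 1 0 p) := by
  have h₀ := Ederiv_comm_apply 0 0 2 0 p
  have h₁ := Ederiv_comm_apply 1 1 2 0 p
  simp only [Fin.reduceEq, ↓reduceIte, zero_sub, sub_self] at h₀ h₁
  simp only [nablaT, E_eq_Ederiv, Derivation.sub_apply, map_sub]
  linear_combination h₀ - h₁

theorem nablaT_mul {f h : P} {n : ℕ} (hf₂₁ : Ederiv 2 1 f = 0)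
    (hf_wt : (Ederiv 0 0 - Ederiv 1 1) f = n * f) (hh₁₀ : Ederiv 1 0 h = 0)
    (hh_wt : (Ederiv 0 0 - Ederiv 1 1) h = 0) :
    nablaT (f * h) =
      (n + 1) * Ederiv 2 0 f * h + n * f * Ederiv 2 0 h + Ederiv 1 0 f * Ederiv 2 1 h := by
  have hcomm := Ederiv_comm_apply 2 1 1 0 f
  simp only [hf₂₁, map_zero, sub_zero, ↓reduceIte, Fin.reduceEq] at hcomm
  simp only [nablaT_eq, Derivation.leibniz, hh₁₀, hh_wt, hf_wt, hcomm, Derivation.map_natCast,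
    smul_eq_mul, mul_zero, zero_add, add_zero]
  ring

theorem Ederiv_minor (w : Fin 3 → P) (c : Fin 2) (r : Fin 3) (c' : Fin 2) (r' : Fin 3) :
    (w 0 • Ederiv 2 0 + w 1 • Ederiv 2 1)
        (X (c, r, 0) * X (c', r', 1) - X (c, r, 1) * X (c', r', 0)) =
      w 2 * (X (c, r, 0) * X (c', r', 1) - X (c, r, 1) * X (c', r', 0)) -
        (Matrix.of ![w, fun k => X (c, r, k), fun k => X (c', r', k)]).det := by
  simp only [Derivation.add_apply, Derivation.smul_apply, map_sub, Derivation.leibniz, Ederiv_X,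
    Fin.reduceEq, ↓reduceIte, smul_eq_mul, mul_zero, zero_add, add_zero, Matrix.det_fin_three,
    Matrix.of_apply, Matrix.cons_val_zero, Matrix.cons_val_one, Matrix.cons_val]
  ring

theorem Ederiv_minors_monomial (w : Fin 3 → P) (γ δ ω : ℕ) :
    (w 0 • Ederiv 2 0 + w 1 • Ederiv 2 1) (a₁₂ ^ γ * b₁₂ ^ δ * ab₁₂ ^ ω) =
      (γ + δ + ω) * w 2 * (a₁₂ ^ γ * b₁₂ ^ δ * ab₁₂ ^ ω) -
        γ * (Matrix.of ![w, A 0, A 1]).det * (a₁₂ ^ (γ - 1) * b₁₂ ^ δ * ab₁₂ ^ ω) -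
        δ * (Matrix.of ![w, B 0, B 1]).det * (a₁₂ ^ γ * b₁₂ ^ (δ - 1) * ab₁₂ ^ ω) -
        ω * (Matrix.of ![w, A 0, B 0]).det * (a₁₂ ^ γ * b₁₂ ^ δ * ab₁₂ ^ (ω - 1)) := by
  set D := w 0 • Ederiv 2 0 + w 1 • Ederiv 2 1
  simp only [Derivation.leibniz, smul_eq_mul,
    D.apply_pow_of_apply_eq_mul_sub (Ederiv_minor w 0 0 0 1),
    D.apply_pow_of_apply_eq_mul_sub (Ederiv_minor w 1 0 1 1),
    D.apply_pow_of_apply_eq_mul_sub (Ederiv_minor w 0 0 1 0)]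
  ring

theorem Ederiv_one_zero_minors_monomial (γ δ ω : ℕ) :
    Ederiv 1 0 (a₁₂ ^ γ * b₁₂ ^ δ * ab₁₂ ^ ω) = 0 := by
  simp only [Derivation.leibniz, Derivation.leibniz_pow, map_sub, Ederiv_X, Fin.reduceEq,
    ↓reduceIte, smul_eq_mul, nsmul_eq_mul, mul_zero, zero_add, add_zero]
  ring

theorem Ederiv_sub_minors_monomial (γ δ ω : ℕ) :
    (Ederiv 0 0 - Ederiv 1 1) (a₁₂ ^ γ * b₁₂ ^ δ * ab₁₂ ^ ω) = 0 := by
  simp only [Derivation.leibniz, Derivation.leibniz_pow, Derivation.sub_apply, map_sub,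
    Ederiv_X, Fin.reduceEq, ↓reduceIte, smul_eq_mul, nsmul_eq_mul]
  ring

theorem det_A₀_B₀_B₁ : (Matrix.of ![A 0, B 0, B 1]).det = abb := by
  simp [Matrix.det_fin_three]

theorem det_B₀_A₀_A₁ : (Matrix.of ![B 0, A 0, A 1]).det = aab := by
  simp only [Matrix.det_fin_three, Matrix.of_apply, Matrix.cons_val_zero, Matrix.cons_val_one,
    Matrix.cons_val]
  ring

theorem A₀_Ederiv_minors_monomial (γ δ ω : ℕ) :
    A 0 0 * Ederiv 2 0 (a₁₂ ^ γ * b₁₂ ^ δ * ab₁₂ ^ ω) +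
        A 0 1 * Ederiv 2 1 (a₁₂ ^ γ * b₁₂ ^ δ * ab₁₂ ^ ω) =
      (γ + δ + ω) * a₃ * (a₁₂ ^ γ * b₁₂ ^ δ * ab₁₂ ^ ω) -
        δ * abb * (a₁₂ ^ γ * b₁₂ ^ (δ - 1) * ab₁₂ ^ ω) := by
  have h := Ederiv_minors_monomial (A 0) γ δ ω
  rw [det_A₀_B₀_B₁, Matrix.det_zero_of_row_eq (i := 0) (j := 1) (by decide) rfl,
    Matrix.det_zero_of_row_eq (i := 0) (j := 1) (by decide) rfl] at h
  simp only [Derivation.add_apply, Derivation.smul_apply, smul_eq_mul] at h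
  linear_combination h

theorem B₀_Ederiv_minors_monomial (γ δ ω : ℕ) :
    B 0 0 * Ederiv 2 0 (a₁₂ ^ γ * b₁₂ ^ δ * ab₁₂ ^ ω) +
        B 0 1 * Ederiv 2 1 (a₁₂ ^ γ * b₁₂ ^ δ * ab₁₂ ^ ω) =
      (γ + δ + ω) * b₃ * (a₁₂ ^ γ * b₁₂ ^ δ * ab₁₂ ^ ω) -
        γ * aab * (a₁₂ ^ (γ - 1) * b₁₂ ^ δ * ab₁₂ ^ ω) := by
  have h := Ederiv_minors_monomial (B 0) γ δ ω
  rw [det_B₀_A₀_A₁, Matrix.det_zero_of_row_eq (i := 0) (j := 1) (by decide) rfl,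
    Matrix.det_zero_of_row_eq (i := 0) (j := 2) (by decide) rfl] at h
  simp only [Derivation.add_apply, Derivation.smul_apply, smul_eq_mul] at h
  linear_combination h

theorem Ederiv_a₁_pow_mul_b₁_pow (i : Fin 3) (α β : ℕ) :
    Ederiv i 0 (a₁ ^ α * b₁ ^ β) =
      α * A 0 i * (a₁ ^ (α - 1) * b₁ ^ β) + β * B 0 i * (a₁ ^ α * b₁ ^ (β - 1)) := by
  simp only [Derivation.leibniz, Derivation.leibniz_pow, Ederiv_X, ↓reduceIte, smul_eq_mul,
    nsmul_eq_mul]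
  ring

theorem Ederiv_two_one_a₁_pow_mul_b₁_pow (α β : ℕ) : Ederiv 2 1 (a₁ ^ α * b₁ ^ β) = 0 := by
  simp [Derivation.leibniz, Derivation.leibniz_pow, Ederiv_X]

theorem Ederiv_sub_a₁_pow_mul_b₁_pow (α β : ℕ) :
    (Ederiv 0 0 - Ederiv 1 1) (a₁ ^ α * b₁ ^ β) = ((α + β : ℕ) : P) * (a₁ ^ α * b₁ ^ β) := by
  have h₁ : Ederiv 1 1 (a₁ ^ α * b₁ ^ β) = 0 := by
    simp [Derivation.leibniz, Derivation.leibniz_pow, Ederiv_X]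
  rw [Derivation.sub_apply, h₁, sub_zero, Ederiv_a₁_pow_mul_b₁_pow, Nat.cast_add]
  linear_combination (b₁ ^ β) * natCast_mul_pow_sub_one_mul α a₁ +
    (a₁ ^ α) * natCast_mul_pow_sub_one_mul β b₁

/-- The action of `∇̃₃,₁` on `g = a₁^α b₁^β a₁₂^γ b₁₂^δ (ab)₁₂^ω`. -/
theorem nablaT_apply (α β γ δ ω : ℕ) :
    nablaT (a₁ ^ α * b₁ ^ β * a₁₂ ^ γ * b₁₂ ^ δ * ab₁₂ ^ ω) =
      C ((α + β + γ + δ + ω + 1 : ℕ) : ℂ) *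
          (C ((α : ℕ) : ℂ) * a₃ * (a₁ ^ (α - 1) * b₁ ^ β * a₁₂ ^ γ * b₁₂ ^ δ * ab₁₂ ^ ω) +
           C ((β : ℕ) : ℂ) * b₃ * (a₁ ^ α * b₁ ^ (β - 1) * a₁₂ ^ γ * b₁₂ ^ δ * ab₁₂ ^ ω)) -
        C ((β * γ : ℕ) : ℂ) * aab *
          (a₁ ^ α * b₁ ^ (β - 1) * a₁₂ ^ (γ - 1) * b₁₂ ^ δ * ab₁₂ ^ ω) -
        C ((α * δ : ℕ) : ℂ) * abb *
          (a₁ ^ (α - 1) * b₁ ^ β * a₁₂ ^ γ * b₁₂ ^ (δ - 1) * ab₁₂ ^ ω) := by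
  set h := a₁₂ ^ γ * b₁₂ ^ δ * ab₁₂ ^ ω
  have hsplit : a₁ ^ α * b₁ ^ β * a₁₂ ^ γ * b₁₂ ^ δ * ab₁₂ ^ ω = a₁ ^ α * b₁ ^ β * h := by ring
  rw [hsplit, nablaT_mul (Ederiv_two_one_a₁_pow_mul_b₁_pow α β)
    (Ederiv_sub_a₁_pow_mul_b₁_pow α β) (Ederiv_one_zero_minors_monomial γ δ ω)
    (Ederiv_sub_minors_monomial γ δ ω), Ederiv_a₁_pow_mul_b₁_pow, Ederiv_a₁_pow_mul_b₁_pow]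
  simp only [map_natCast]
  push_cast
  linear_combination (α * (a₁ ^ (α - 1) * b₁ ^ β)) * A₀_Ederiv_minors_monomial γ δ ω +
    (β * (a₁ ^ α * b₁ ^ (β - 1))) * B₀_Ederiv_minors_monomial γ δ ω -
    (b₁ ^ β * Ederiv 2 0 h) * natCast_mul_pow_sub_one_mul α a₁ -
    (a₁ ^ α * Ederiv 2 0 h) * natCast_mul_pow_sub_one_mul β b₁
end

section
/- The three polynomials x₂ − x₁, (x₂ − x₁)·z₂ + x₁ − y₁, and z₂ − z₁ in the polynomial ring ℂ[x₁, y₁, z₁, x₂, y₂, z₂] are algebraically independent over ℂ. -/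
open MvPolynomial Finset


/-- The polynomials `x₂ − x₁`, `(x₂ − x₁)z₂ + x₁ − y₁`, `z₂ − z₁` in
`ℂ[x₁,y₁,z₁,x₂,y₂,z₂]` (variables `X 0,…,X 5`) are algebraically independent. -/
theorem restricted_determinants_algebraicIndependent :
    AlgebraicIndependent ℂ
      ![(X 3 - X 0 : MvPolynomial (Fin 6) ℂ),
        (X 3 - X 0) * X 5 + X 0 - X 1,
        X 5 - X 2] := by
  rw [algebraicIndependent_iff_injective_aeval]
  set f := ![(X 3 - X 0 : MvPolynomial (Fin 6) ℂ),
        (X 3 - X 0) * X 5 + X 0 - X 1, X 5 - X 2] with hf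
  let φ : MvPolynomial (Fin 6) ℂ →ₐ[ℂ] MvPolynomial (Fin 3) ℂ :=
    aeval ![0, -X 1, -X 2, X 0, 0, 0]
  have h : φ.comp (aeval f) = AlgHom.id ℂ _ := by
    apply MvPolynomial.algHom_ext
    intro i
    fin_cases i <;> simp [φ, hf, Matrix.cons_val_succ] <;> rfl
  intro a b hab
  have h2 := congrArg φ hab
  rw [← AlgHom.comp_apply, ← AlgHom.comp_apply, h] at h2
  simpa using h2
end
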